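/- arXiv:1908.10668 — 6 statements merged into one kernel-verified Lean document; each statement's English description precedes it below -/
import Mathlib

section
/- Let G be a connected simple graph on a nonempty finite vertex set V all of whose cycles are pairwise vertex disjoint, i.e., any two cycles of G with different edge sets have disjoint vertex supports. Then every gain matrix A on G satisfies λ₁(A) ≤ ρ(A) ≤ 3 · λ₁(A), where λ₁(A) is the largest eigenvalue of A and ρ(A) is the spectral radius of A. -/
open SimpleGraph

/-- A gain matrix on a simple graph `G`: unimodular entries on edges, zero elsewhere,
and `A j i` is the complex conjugate of `A i j`. -/
def IsGainMatrix {V : Type*} (G : SimpleGraph V) (A : Matrix V V ℂ) : Prop :=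
  (∀ i j, G.Adj i j → ‖A i j‖ = 1) ∧ (∀ i j, ¬ G.Adj i j → A i j = 0) ∧
    (∀ i j, A j i = (starRingEnd ℂ) (A i j))

/-- A gain matrix is Hermitian. -/
theorem IsGainMatrix.isHermitian {V : Type*} {G : SimpleGraph V} {A : Matrix V V ℂ}
    (h : IsGainMatrix G A) : A.IsHermitian := by
  ext i j
  rw [Matrix.conjTranspose_apply, h.2.2 j i]
  rfl

/-- The gain of a walk: the product of the entries of `A` along the darts of the walk. -/
noncomputable def gainOfWalk {V : Type*} {G : SimpleGraph V} (A : Matrix V V ℂ)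
    {u v : V} (w : G.Walk u v) : ℂ :=
  (w.darts.map fun d => A d.fst d.snd).prod

/-- Switching equivalence of two gain matrices. -/
def SwitchingEquiv {V : Type*} (A₁ A₂ : Matrix V V ℂ) : Prop :=
  ∃ ζ : V → ℂ, (∀ v, ‖ζ v‖ = 1) ∧ ∀ i j, A₂ i j = (ζ i)⁻¹ * A₁ i j * ζ j

/-- The largest eigenvalue of a Hermitian matrix. -/
noncomputable def lambdaMax {V : Type*} [Fintype V] [DecidableEq V] {𝕜 : Type*} [RCLike 𝕜]
    (A : Matrix V V 𝕜) (hA : A.IsHermitian) : ℝ :=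
  ⨆ i, hA.eigenvalues i

/-- The spectral radius of a Hermitian matrix: the largest absolute value of an eigenvalue. -/
noncomputable def specRad {V : Type*} [Fintype V] [DecidableEq V] {𝕜 : Type*} [RCLike 𝕜]
    (A : Matrix V V 𝕜) (hA : A.IsHermitian) : ℝ :=
  ⨆ i, |hA.eigenvalues i|

set_option linter.unusedSectionVars false

open Matrix

section aux
variable {V : Type*} [Fintype V] [Nonempty V] [DecidableEq V]

section quad
variable {A : Matrix V V ℂ} (hA : A.IsHermitian)

lemma dot_self_eq (x : V → ℂ) : star x ⬝ᵥ x = ((∑ i, ‖x i‖^2 : ℝ) : ℂ) := by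
  push_cast
  simp only [dotProduct, Pi.star_apply, RCLike.star_def]
  congr 1
  ext i
  rw [RCLike.conj_mul]
  norm_cast

lemma quad_eq (x : V → ℂ) :
    star x ⬝ᵥ A *ᵥ x =
      ∑ i, (hA.eigenvalues i : ℂ) * ((‖(star (hA.eigenvectorUnitary : Matrix V V ℂ) *ᵥ x) i‖^2 : ℝ) : ℂ) := by
  set Um := (hA.eigenvectorUnitary : Matrix V V ℂ) with hUm
  set y := star Um *ᵥ x with hy
  have hsy : star y = star x ᵥ* Um := by
    rw [hy, star_mulVec, star_eq_conjTranspose, conjTranspose_conjTranspose]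
  have step1 : star x ⬝ᵥ A *ᵥ x = star y ⬝ᵥ ((diagonal (RCLike.ofReal ∘ hA.eigenvalues)) *ᵥ y) := by
    conv_lhs => rw [hA.spectral_theorem, Unitary.conjStarAlgAut_apply]
    rw [← mulVec_mulVec, ← mulVec_mulVec, dotProduct_mulVec, ← hsy]
  rw [step1, dotProduct]
  congr 1; ext i
  rw [mulVec_diagonal]
  simp only [Pi.star_apply, RCLike.star_def, Function.comp_apply]
  rw [mul_comm ((RCLike.ofReal (hA.eigenvalues i)) : ℂ) (y i), ← mul_assoc, RCLike.conj_mul]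
  push_cast
  rw [mul_comm]
  rfl

lemma coords_norm (x : V → ℂ) :
    ∑ i, ‖(star (hA.eigenvectorUnitary : Matrix V V ℂ) *ᵥ x) i‖^2 = ∑ i, ‖x i‖^2 := by
  set Um := (hA.eigenvectorUnitary : Matrix V V ℂ) with hUm
  set y := star Um *ᵥ x with hy
  have h2 : Um * Umᴴ = 1 := by
    rw [← star_eq_conjTranspose]
    exact (Matrix.mem_unitaryGroup_iff).mp (hA.eigenvectorUnitary).2
  have h1 : star y ⬝ᵥ y = star x ⬝ᵥ x := by
    rw [hy, star_mulVec, star_eq_conjTranspose, conjTranspose_conjTranspose,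
      ← dotProduct_mulVec, mulVec_mulVec, h2, one_mulVec]
  have h3 := (dot_self_eq y).symm.trans (h1.trans (dot_self_eq x))
  exact_mod_cast h3

lemma eig_le_lambdaMax (i : V) : hA.eigenvalues i ≤ lambdaMax A hA :=
  le_ciSup (Set.Finite.bddAbove (Set.finite_range _)) i

lemma lambdaMax_eq_eig : ∃ i, lambdaMax A hA = hA.eigenvalues i := by
  obtain ⟨i, hi⟩ := Finite.exists_max hA.eigenvalues
  exact ⟨i, le_antisymm (ciSup_le hi) (eig_le_lambdaMax hA i)⟩

/-- Rayleigh upper bound. -/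
lemma quad_re_le (x : V → ℂ) :
    (star x ⬝ᵥ A *ᵥ x).re ≤ lambdaMax A hA * ∑ i, ‖x i‖^2 := by
  rw [quad_eq hA x]
  rw [← coords_norm hA x]
  set y := star (hA.eigenvectorUnitary : Matrix V V ℂ) *ᵥ x with hy
  have : ((∑ i, (hA.eigenvalues i : ℂ) * ((‖y i‖^2 : ℝ) : ℂ)).re)
      = ∑ i, hA.eigenvalues i * ‖y i‖^2 := by
    push_cast
    rw [Complex.re_sum]
    congr 1; ext i
    norm_cast
  rw [this, Finset.mul_sum]
  apply Finset.sum_le_sum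
  intro i _
  exact mul_le_mul_of_nonneg_right (eig_le_lambdaMax hA i) (by positivity)

/-- Attainment of each eigenvalue as a quadratic form value on a unit vector. -/
lemma quad_attain (i : V) :
    ∃ x : V → ℂ, (∑ v, ‖x v‖^2) = 1 ∧ star x ⬝ᵥ A *ᵥ x = ((hA.eigenvalues i : ℝ) : ℂ) := by
  set x : V → ℂ := ⇑(hA.eigenvectorBasis i) with hx
  have hn : ∑ v, ‖x v‖^2 = 1 := by
    have h0 : ‖hA.eigenvectorBasis i‖ = 1 := hA.eigenvectorBasis.orthonormal.1 i
    rw [EuclideanSpace.norm_eq] at h0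
    have h1 : ∑ v, ‖x v‖^2 = Real.sqrt (∑ v, ‖x v‖^2) ^ 2 := by
      rw [Real.sq_sqrt (by positivity)]
    have h0' : Real.sqrt (∑ v, ‖x v‖ ^ 2) = 1 := h0
    rw [h1, h0']
    norm_num
  refine ⟨x, hn, ?_⟩
  have hd : star x ⬝ᵥ x = ((1:ℝ) : ℂ) := by rw [dot_self_eq, hn]
  rw [hx, hA.mulVec_eigenvectorBasis i, RCLike.real_smul_eq_coe_smul (K := ℂ),
    dotProduct_smul, smul_eq_mul, ← hx, hd]
  norm_num

end quad

section derived
variable {A B : Matrix V V ℂ}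

lemma lambdaMax_le_of_quad (hA : A.IsHermitian) {c : ℝ}
    (h : ∀ x : V → ℂ, (∑ v, ‖x v‖^2) = 1 → (star x ⬝ᵥ A *ᵥ x).re ≤ c) :
    lambdaMax A hA ≤ c := by
  obtain ⟨i, hi⟩ := lambdaMax_eq_eig hA
  obtain ⟨x, hx1, hx2⟩ := quad_attain hA i
  have := h x hx1
  rw [hx2] at this
  simpa [hi] using this

lemma lambdaMax_add_le (hA : A.IsHermitian) (hB : B.IsHermitian) (hAB : (A + B).IsHermitian) :
    lambdaMax (A + B) hAB ≤ lambdaMax A hA + lambdaMax B hB := by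
  apply lambdaMax_le_of_quad
  intro x hx
  have h1 : star x ⬝ᵥ (A + B) *ᵥ x = star x ⬝ᵥ A *ᵥ x + star x ⬝ᵥ B *ᵥ x := by
    rw [add_mulVec, dotProduct_add]
  rw [h1, Complex.add_re]
  have h2 := quad_re_le hA x
  have h3 := quad_re_le hB x
  rw [hx, mul_one] at h2 h3
  linarith

lemma neg_eig_le (hA : A.IsHermitian) (i : V) :
    -hA.eigenvalues i ≤ lambdaMax (-A) hA.neg := by
  obtain ⟨x, hx1, hx2⟩ := quad_attain hA i
  have h1 : star x ⬝ᵥ (-A) *ᵥ x = -(star x ⬝ᵥ A *ᵥ x) := by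
    rw [neg_mulVec, dotProduct_neg]
  have h2 := quad_re_le hA.neg x
  rw [hx1, mul_one, h1, hx2] at h2
  simpa using h2

lemma lambdaMax_le_specRad (hA : A.IsHermitian) : lambdaMax A hA ≤ specRad A hA := by
  apply ciSup_le
  intro i
  exact le_trans (le_abs_self _) (le_ciSup (Set.Finite.bddAbove (Set.finite_range (fun j => |hA.eigenvalues j|))) i)

lemma specRad_le_of (hA : A.IsHermitian) {c : ℝ} (h1 : lambdaMax A hA ≤ c)
    (h2 : lambdaMax (-A) hA.neg ≤ c) : specRad A hA ≤ c := by
  apply ciSup_le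
  intro i
  rw [abs_le]
  constructor
  · have := neg_eig_le hA i
    linarith
  · exact le_trans (eig_le_lambdaMax hA i) h1

lemma lambdaMax_congr {A B : Matrix V V ℂ} (h : A = B) (hA : A.IsHermitian) (hB : B.IsHermitian) :
    lambdaMax A hA = lambdaMax B hB := by subst h; rfl

end derived

section gainbounds
variable {A : Matrix V V ℂ}

lemma lambdaMax_nonneg (hA : A.IsHermitian) (hdiag : ∀ v, A v v = 0) :
    0 ≤ lambdaMax A hA := by
  obtain ⟨v⟩ := ‹Nonempty V›
  have h := quad_re_le hA (Pi.single v 1)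
  have h1 : star (Pi.single v (1:ℂ)) ⬝ᵥ A *ᵥ Pi.single v 1 = A v v := by
    rw [← Pi.single_star, star_one, single_dotProduct, Matrix.mulVec_single]
    simp
  have h2 : ∑ i, ‖(Pi.single v 1 : V → ℂ) i‖^2 = 1 := by
    have hsx : star (Pi.single v (1:ℂ)) ⬝ᵥ Pi.single v 1 = ((1:ℝ):ℂ) := by
      rw [← Pi.single_star, star_one, single_dotProduct]
      simp
    exact_mod_cast (dot_self_eq _).symm.trans hsx
  rw [h1, hdiag, h2, mul_one] at h
  simpa using h

lemma one_le_lambdaMax (hA : A.IsHermitian) {i j : V} (hne : i ≠ j) (hnorm : ‖A i j‖ = 1)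
    (hii : A i i = 0) (hjj : A j j = 0) (hji : A j i = (starRingEnd ℂ) (A i j)) :
    1 ≤ lambdaMax A hA := by
  set c := (starRingEnd ℂ) (A i j) with hc
  set x : V → ℂ := Pi.single i 1 + Pi.single j c with hx
  have key : A i j * c = 1 := by
    rw [hc, Complex.mul_conj]
    norm_cast
    rw [Complex.normSq_eq_norm_sq, hnorm]
    norm_num
  have hq : star x ⬝ᵥ A *ᵥ x = 2 := by
    rw [hx, star_add, ← Pi.single_star, ← Pi.single_star, star_one,
      Matrix.mulVec_add, Matrix.mulVec_single, Matrix.mulVec_single]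
    rw [add_dotProduct, single_dotProduct, single_dotProduct]
    simp only [Pi.add_apply, Pi.smul_apply, Matrix.col_apply, op_smul_eq_mul, mul_one]
    rw [hii, hjj, hji]
    have h4 : star c = A i j := by rw [hc, RCLike.star_def, RCLike.conj_conj]
    rw [h4]
    have h5 : (1:ℂ) * (0 + A i j * c) + A i j * (c + 0 * c) = A i j * c + A i j * c := by ring
    rw [h5, key]
    norm_num
  have hn : ∑ v, ‖x v‖^2 = 2 := by
    have hsx : star x ⬝ᵥ x = 2 := by
      rw [hx, star_add, ← Pi.single_star, ← Pi.single_star, star_one, add_dotProduct,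
        single_dotProduct, single_dotProduct]
      simp only [Pi.add_apply, Pi.single_apply, if_pos, hne, Ne.symm hne, if_neg, if_false,
        eq_self_iff_true, if_true]
      have h4 : star c = A i j := by rw [hc, RCLike.star_def, RCLike.conj_conj]
      rw [h4]
      have h5 : (1:ℂ) * ((1:ℂ) + 0) + A i j * (0 + c) = (1:ℂ) + A i j * c := by ring
      rw [h5, key]
      norm_num
    have := (dot_self_eq x).symm.trans hsx
    exact_mod_cast this
  have h := quad_re_le hA x
  rw [hq, hn] at h
  norm_num at h
  linarith

end gainbounds

section matching
variable {M : Matrix V V ℂ}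

lemma matching_quad_bound (hM : M.IsHermitian) (hnorm : ∀ i j, ‖M i j‖ ≤ 1)
    (huniq : ∀ j i k, M i j ≠ 0 → M k j ≠ 0 → i = k) (x : V → ℂ) :
    |(star x ⬝ᵥ M *ᵥ x).re| ≤ ∑ v, ‖x v‖^2 := by
  classical
  have hsym : ∀ a b, M a b ≠ 0 → M b a ≠ 0 := by
    intro a b h
    have : M b a = star (M a b) := by
      conv_lhs => rw [← hM]
      rfl
    rw [this]
    simpa using h
  set σ : V → V := fun a => if h : ∃ b, M b a ≠ 0 then h.choose else a with hσ
  have hspec : ∀ a (h : ∃ b, M b a ≠ 0), M (σ a) a ≠ 0 := by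
    intro a h
    simp only [hσ, dif_pos h]
    exact h.choose_spec
  have hrow : ∀ a b, M a b ≠ 0 → a = σ b := by
    intro a b h
    have hex : ∃ c, M c b ≠ 0 := ⟨a, h⟩
    exact huniq b a (σ b) h (hspec b hex)
  have hcol : ∀ a b, M a b ≠ 0 → b = σ a := fun a b h => hrow b a (hsym a b h)
  have hinv : Function.Involutive σ := by
    intro a
    by_cases h : ∃ b, M b a ≠ 0
    · have h1 := hspec a h
      have h2 : M a (σ a) ≠ 0 := hsym _ _ h1
      exact (hrow a (σ a) h2).symm
    · have h1 : σ a = a := by simp only [hσ, dif_neg h]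
      rw [h1, h1]
  have hrowsum : ∀ a, (M *ᵥ x) a = M a (σ a) * x (σ a) := by
    intro a
    rw [show (M *ᵥ x) a = ∑ b, M a b * x b from rfl]
    apply Finset.sum_eq_single
    · intro b _ hb
      by_cases h : M a b = 0
      · rw [h, zero_mul]
      · exact absurd (hcol a b h) hb
    · intro h; exact absurd (Finset.mem_univ _) h
  have hq : star x ⬝ᵥ M *ᵥ x = ∑ a, star (x a) * (M a (σ a) * x (σ a)) := by
    rw [dotProduct]
    congr 1; ext a
    rw [hrowsum a]
    rfl
  have hstep : |(star x ⬝ᵥ M *ᵥ x).re| ≤ ∑ a, ‖x a‖ * ‖x (σ a)‖ := by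
    rw [hq]
    calc |(∑ a, star (x a) * (M a (σ a) * x (σ a))).re|
        ≤ ‖∑ a, star (x a) * (M a (σ a) * x (σ a))‖ := Complex.abs_re_le_norm _
      _ ≤ ∑ a, ‖star (x a) * (M a (σ a) * x (σ a))‖ := norm_sum_le _ _
      _ ≤ ∑ a, ‖x a‖ * ‖x (σ a)‖ := by
          apply Finset.sum_le_sum
          intro a _
          rw [norm_mul, norm_mul, norm_star]
          have h1 := hnorm a (σ a)
          have h2 : (0:ℝ) ≤ ‖x (σ a)‖ := norm_nonneg _
          have h3 : (0:ℝ) ≤ ‖x a‖ := norm_nonneg _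
          have h4 : ‖M a (σ a)‖ * ‖x (σ a)‖ ≤ ‖x (σ a)‖ := by nlinarith
          calc ‖x a‖ * (‖M a (σ a)‖ * ‖x (σ a)‖) ≤ ‖x a‖ * ‖x (σ a)‖ :=
                mul_le_mul_of_nonneg_left h4 h3
            _ ≤ ‖x a‖ * ‖x (σ a)‖ := le_refl _
  refine hstep.trans ?_
  have hsq : ∀ a, ‖x a‖ * ‖x (σ a)‖ ≤ (‖x a‖^2 + ‖x (σ a)‖^2)/2 := by
    intro a
    nlinarith [sq_nonneg (‖x a‖ - ‖x (σ a)‖)]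
  calc ∑ a, ‖x a‖ * ‖x (σ a)‖ ≤ ∑ a, (‖x a‖^2 + ‖x (σ a)‖^2)/2 :=
        Finset.sum_le_sum fun a _ => hsq a
    _ = ((∑ a, ‖x a‖^2) + ∑ a, ‖x (σ a)‖^2)/2 := by
        rw [← Finset.sum_add_distrib, ← Finset.sum_div]
    _ = ∑ a, ‖x a‖^2 := by
        have : ∑ a, ‖x (σ a)‖^2 = ∑ a, ‖x a‖^2 :=
          Equiv.sum_comp (Equiv.ofBijective σ hinv.bijective) (fun a => ‖x a‖^2)
        rw [this]
        ring

lemma lambdaMax_le_one_of_matching (hM : M.IsHermitian) (hnorm : ∀ i j, ‖M i j‖ ≤ 1)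
    (huniq : ∀ j i k, M i j ≠ 0 → M k j ≠ 0 → i = k) :
    lambdaMax M hM ≤ 1 ∧ lambdaMax (-M) hM.neg ≤ 1 := by
  constructor
  · apply lambdaMax_le_of_quad
    intro x hx
    have := matching_quad_bound hM hnorm huniq x
    rw [hx] at this
    calc (star x ⬝ᵥ M *ᵥ x).re ≤ |(star x ⬝ᵥ M *ᵥ x).re| := le_abs_self _
      _ ≤ 1 := this
  · apply lambdaMax_le_of_quad
    intro x hx
    have hb := matching_quad_bound hM hnorm huniq x
    rw [hx] at hb
    have h1 : star x ⬝ᵥ (-M) *ᵥ x = -(star x ⬝ᵥ M *ᵥ x) := by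
      rw [neg_mulVec, dotProduct_neg]
    rw [h1, Complex.neg_re]
    calc -(star x ⬝ᵥ M *ᵥ x).re ≤ |(star x ⬝ᵥ M *ᵥ x).re| := neg_le_abs _
      _ ≤ 1 := hb

end matching

section signflip
variable {F : Matrix V V ℂ}

lemma lambdaMax_neg_le_of_flip (hF : F.IsHermitian) (ζ : V → ℂ) (hζ : ∀ v, ‖ζ v‖ = 1)
    (hreal : ∀ v, star (ζ v) = ζ v)
    (hflip : ∀ i j, ζ i * F i j * ζ j = - F i j) :
    lambdaMax (-F) hF.neg ≤ lambdaMax F hF := by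
  obtain ⟨i0, hi0⟩ := lambdaMax_eq_eig hF.neg
  obtain ⟨x, hx1, hx2⟩ := quad_attain hF.neg i0
  set y : V → ℂ := fun v => ζ v * x v with hy
  have hqy : star y ⬝ᵥ F *ᵥ y = star x ⬝ᵥ (-F) *ᵥ x := by
    rw [dotProduct, dotProduct]
    congr 1; ext a
    rw [show (F *ᵥ y) a = ∑ b, F a b * y b from rfl,
        show ((-F) *ᵥ x) a = ∑ b, (-F) a b * x b from rfl,
        Finset.mul_sum, Finset.mul_sum]
    congr 1; ext b
    simp only [Pi.star_apply, Matrix.neg_apply, hy]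
    rw [star_mul', hreal]
    have h5 : (ζ a * star (x a)) * (F a b * (ζ b * x b)) = star (x a) * ((ζ a * F a b * ζ b) * x b) := by
      ring
    rw [h5, hflip]
  have hny : ∑ v, ‖y v‖^2 = 1 := by
    rw [← hx1]
    congr 1; ext v
    rw [hy]
    simp only [norm_mul, hζ, one_mul]
  have h := quad_re_le hF y
  rw [hny, mul_one, hqy, hx2] at h
  rw [hi0]
  simpa using h

end signflip

section graphs
variable {G : SimpleGraph V}

lemma shortest_edge_dist_ne (hG : G.Connected) (r : V) :
    ∀ {u v : V} (p : G.Walk u v), G.dist r v = G.dist r u + p.length →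
      ∀ a b, s(a,b) ∈ p.edges → G.dist r a ≠ G.dist r b := by
  intro u v p
  induction p with
  | nil => intro _ a b hab; simp at hab
  | @cons u w v huw q ih =>
    intro hlen a b hab
    have h1 : G.dist w v ≤ q.length := SimpleGraph.dist_le q
    have h2 : G.dist r v ≤ G.dist r w + G.dist w v := hG.dist_triangle
    have h3 : G.dist r w ≤ G.dist r u + 1 := by
      have h5 : G.dist u w ≤ 1 := by
        have := SimpleGraph.dist_le (Walk.cons huw Walk.nil)
        simpa using this
      calc G.dist r w ≤ G.dist r u + G.dist u w := hG.dist_triangle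
        _ ≤ G.dist r u + 1 := by omega
    rw [Walk.length_cons] at hlen
    have h4 : G.dist r w = G.dist r u + 1 ∧ G.dist r v = G.dist r w + q.length := by omega
    rw [Walk.edges_cons] at hab
    rcases List.mem_cons.mp hab with h | h
    · rw [Sym2.eq_iff] at h
      rcases h with ⟨ha, hb⟩ | ⟨ha, hb⟩ <;> subst ha <;> subst hb <;> omega
    · exact ih h4.2 a b h

lemma exists_cycle_through_horizontal (hG : G.Connected) (r : V)
    {i j : V} (hij : G.Adj i j) (hd : G.dist r i = G.dist r j) :
    ∃ C : G.Walk j j, C.IsCycle ∧ s(i,j) ∈ C.edges ∧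
      ∀ a b, s(a,b) ∈ C.edges → s(a,b) = s(i,j) ∨ G.dist r a ≠ G.dist r b := by
  obtain ⟨Pi, hPi⟩ := (hG.preconnected r i).exists_walk_length_eq_dist
  obtain ⟨Pj, hPj⟩ := (hG.preconnected r j).exists_walk_length_eq_dist
  have hPiE : ∀ a b, s(a,b) ∈ Pi.edges → G.dist r a ≠ G.dist r b :=
    shortest_edge_dist_ne hG r Pi (by simp [SimpleGraph.dist_self, hPi])
  have hPjE : ∀ a b, s(a,b) ∈ Pj.edges → G.dist r a ≠ G.dist r b :=
    shortest_edge_dist_ne hG r Pj (by simp [SimpleGraph.dist_self, hPj])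
  set W : G.Walk i j := Pi.reverse.append Pj with hW
  set Q := W.bypass with hQdef
  have hQP : Q.IsPath := W.bypass_isPath
  have hQE : Q.edges ⊆ W.edges := W.edges_bypass_subset
  have hWE : ∀ e ∈ W.edges, e ∈ Pi.edges ∨ e ∈ Pj.edges := by
    intro e he
    rw [hW, Walk.edges_append, List.mem_append] at he
    rcases he with he | he
    · left; rwa [Walk.edges_reverse, List.mem_reverse] at he
    · right; exact he
  have hQnh : ∀ a b, s(a,b) ∈ Q.edges → G.dist r a ≠ G.dist r b := by
    intro a b h
    rcases hWE _ (hQE h) with h' | h'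
    · exact hPiE a b h'
    · exact hPjE a b h'
  have hnotin : s(j,i) ∉ Q.edges := by
    intro h
    exact hQnh j i h hd.symm
  refine ⟨Walk.cons hij.symm Q, ?_, ?_, ?_⟩
  · exact SimpleGraph.Path.cons_isCycle ⟨Q, hQP⟩ hij.symm hnotin
  · rw [Walk.edges_cons]
    exact List.mem_cons.mpr (Or.inl (Sym2.eq_swap))
  · intro a b hab
    rw [Walk.edges_cons] at hab
    rcases List.mem_cons.mp hab with h | h
    · left; rw [h]; exact Sym2.eq_swap.symm
    · right; exact hQnh a b h

lemma horizontal_matching (hG : G.Connected)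
    (hdisj : ∀ (u v : V) (w₁ : G.Walk u u) (w₂ : G.Walk v v), w₁.IsCycle → w₂.IsCycle →
      w₁.edges.toFinset ≠ w₂.edges.toFinset → ∀ x, x ∈ w₁.support → x ∉ w₂.support)
    (r : V) : ∀ j i k, G.Adj i j → G.Adj k j → G.dist r i = G.dist r j →
      G.dist r k = G.dist r j → i = k := by
  intro j i k hij hkj hdi hdk
  by_contra hik
  obtain ⟨C1, hC1c, hC1m, hC1e⟩ := exists_cycle_through_horizontal hG r hij hdi
  obtain ⟨C2, hC2c, hC2m, hC2e⟩ := exists_cycle_through_horizontal hG r hkj hdk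
  have hne : C1.edges.toFinset ≠ C2.edges.toFinset := by
    intro h
    have h1 : s(i,j) ∈ C2.edges := by
      have h0 : s(i,j) ∈ C1.edges.toFinset := List.mem_toFinset.mpr hC1m
      rw [h] at h0
      exact List.mem_toFinset.mp h0
    rcases hC2e i j h1 with h2 | h2
    · rw [Sym2.eq_iff] at h2
      rcases h2 with ⟨h3, _⟩ | ⟨h3, _⟩
      · exact hik h3
      · exact G.ne_of_adj hij h3
    · exact h2 hdi
  exact hdisj j j C1 C2 hC1c hC2c hne j C1.start_mem_support C2.start_mem_support

end graphs

theorem stmt_11_aux {G : SimpleGraph V} (hG : G.Connected)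
    (hdisj : ∀ (u v : V) (w₁ : G.Walk u u) (w₂ : G.Walk v v), w₁.IsCycle → w₂.IsCycle →
      w₁.edges.toFinset ≠ w₂.edges.toFinset → ∀ x, x ∈ w₁.support → x ∉ w₂.support)
    (A : Matrix V V ℂ)
    (hnorm1 : ∀ i j, G.Adj i j → ‖A i j‖ = 1) (hzero : ∀ i j, ¬ G.Adj i j → A i j = 0)
    (hconjsym : ∀ i j, A j i = (starRingEnd ℂ) (A i j)) (hH : A.IsHermitian) :
    lambdaMax A hH ≤ specRad A hH ∧ specRad A hH ≤ 3 * lambdaMax A hH := by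
  classical
  refine ⟨lambdaMax_le_specRad hH, ?_⟩
  have hnormle : ∀ i j, ‖A i j‖ ≤ 1 := by
    intro i j
    by_cases h : G.Adj i j
    · exact le_of_eq (hnorm1 i j h)
    · rw [hzero i j h]; simp
  have hAdj_of_ne : ∀ i j, A i j ≠ 0 → G.Adj i j := by
    intro i j h
    by_contra hc
    exact h (hzero i j hc)
  by_cases hE : ∃ i j, G.Adj i j
  · obtain ⟨i0, j0, hadj⟩ := hE
    set r : V := Classical.arbitrary V with hr
    -- the horizontal part M
    set M : Matrix V V ℂ := fun i j => if G.dist r i = G.dist r j then A i j else 0 with hM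
    have hMapp : ∀ i j, M i j = if G.dist r i = G.dist r j then A i j else 0 := fun i j => rfl
    have hMH : M.IsHermitian := by
      ext i j
      rw [Matrix.conjTranspose_apply, hMapp, hMapp]
      by_cases h : G.dist r i = G.dist r j
      · rw [if_pos h.symm, if_pos h, hconjsym j i]
        simp
      · rw [if_neg (fun hc => h hc.symm), if_neg h, star_zero]
    have hMnorm : ∀ i j, ‖M i j‖ ≤ 1 := by
      intro i j
      rw [hMapp]
      by_cases h : G.dist r i = G.dist r j
      · rw [if_pos h]; exact hnormle i j
      · rw [if_neg h]; simp
    have hMuniq : ∀ j i k, M i j ≠ 0 → M k j ≠ 0 → i = k := by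
      intro j i k h1 h2
      rw [hMapp] at h1 h2
      by_cases hd1 : G.dist r i = G.dist r j
      · rw [if_pos hd1] at h1
        by_cases hd2 : G.dist r k = G.dist r j
        · rw [if_pos hd2] at h2
          exact horizontal_matching hG hdisj r j i k (hAdj_of_ne i j h1) (hAdj_of_ne k j h2) hd1 hd2
        · rw [if_neg hd2] at h2; exact absurd rfl h2
      · rw [if_neg hd1] at h1; exact absurd rfl h1
    obtain ⟨hM1, hM2⟩ := lambdaMax_le_one_of_matching hMH hMnorm hMuniq
    -- the non-horizontal part F
    set F : Matrix V V ℂ := A - M with hF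
    have hFH : F.IsHermitian := hH.sub hMH
    have hFapp : ∀ i j, F i j = if G.dist r i = G.dist r j then 0 else A i j := by
      intro i j
      rw [hF, Matrix.sub_apply, hMapp]
      by_cases h : G.dist r i = G.dist r j
      · rw [if_pos h, if_pos h, sub_self]
      · rw [if_neg h, if_neg h, sub_zero]
    set ζ : V → ℂ := fun v => (-1 : ℂ)^(G.dist r v) with hζ
    have hζn : ∀ v, ‖ζ v‖ = 1 := by intro v; rw [hζ]; simp
    have hζr : ∀ v, star (ζ v) = ζ v := by intro v; rw [hζ]; simp
    have hflip : ∀ i j, ζ i * F i j * ζ j = - F i j := by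
      intro i j
      rw [hFapp]
      by_cases h : G.dist r i = G.dist r j
      · rw [if_pos h]; ring
      · rw [if_neg h]
        by_cases hA0 : A i j = 0
        · rw [hA0]; ring
        · have hadj' : G.Adj i j := hAdj_of_ne i j hA0
          have hd1 : G.dist r i ≤ G.dist r j + 1 := by
            have h5 : G.dist j i ≤ 1 := by
              have := SimpleGraph.dist_le (Walk.cons hadj'.symm Walk.nil)
              simpa using this
            calc G.dist r i ≤ G.dist r j + G.dist j i := hG.dist_triangle
              _ ≤ G.dist r j + 1 := by omega
          have hd2 : G.dist r j ≤ G.dist r i + 1 := by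
            have h5 : G.dist i j ≤ 1 := by
              have := SimpleGraph.dist_le (Walk.cons hadj' Walk.nil)
              simpa using this
            calc G.dist r j ≤ G.dist r i + G.dist i j := hG.dist_triangle
              _ ≤ G.dist r i + 1 := by omega
          have hcases : G.dist r i = G.dist r j + 1 ∨ G.dist r j = G.dist r i + 1 := by omega
          have hpow1 : ∀ n : ℕ, (-1:ℂ)^(n+1) * (-1)^n = -1 := by
            intro n
            rw [pow_succ, mul_comm ((-1:ℂ)^n) (-1), mul_assoc, ← mul_pow]
            norm_num
          have hpow2 : ∀ n : ℕ, (-1:ℂ)^n * (-1)^(n+1) = -1 := by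
            intro n
            rw [mul_comm]
            exact hpow1 n
          have hprod : ζ i * ζ j = -1 := by
            rcases hcases with hc | hc
            · rw [hζ]
              simp only []
              rw [hc]
              exact hpow1 _
            · rw [hζ]
              simp only []
              rw [hc]
              exact hpow2 _
          calc ζ i * A i j * ζ j = (ζ i * ζ j) * A i j := by ring
            _ = - A i j := by rw [hprod]; ring
    have hlF : lambdaMax (-F) hFH.neg ≤ lambdaMax F hFH :=
      lambdaMax_neg_le_of_flip hFH ζ hζn hζr hflip
    -- λmax A ≥ 1
    have hone : 1 ≤ lambdaMax A hH :=
      one_le_lambdaMax hH hadj.ne (hnorm1 _ _ hadj)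
        (hzero i0 i0 (G.irrefl)) (hzero j0 j0 (G.irrefl)) (hconjsym i0 j0)
    -- assemble
    have hFeq : F = A + (-M) := by rw [hF, sub_eq_add_neg]
    have hFle : lambdaMax F hFH ≤ lambdaMax A hH + 1 := by
      calc lambdaMax F hFH = lambdaMax (A + (-M)) (hH.add hMH.neg) :=
            lambdaMax_congr hFeq hFH (hH.add hMH.neg)
        _ ≤ lambdaMax A hH + lambdaMax (-M) hMH.neg := lambdaMax_add_le hH hMH.neg _
        _ ≤ lambdaMax A hH + 1 := by linarith
    have hnegAeq : -A = (-F) + (-M) := by rw [hF]; abel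
    have hnegA : lambdaMax (-A) hH.neg ≤ lambdaMax A hH + 2 := by
      calc lambdaMax (-A) hH.neg = lambdaMax ((-F) + (-M)) (hFH.neg.add hMH.neg) :=
            lambdaMax_congr hnegAeq hH.neg (hFH.neg.add hMH.neg)
        _ ≤ lambdaMax (-F) hFH.neg + lambdaMax (-M) hMH.neg := lambdaMax_add_le hFH.neg hMH.neg _
        _ ≤ lambdaMax F hFH + 1 := by linarith
        _ ≤ lambdaMax A hH + 2 := by linarith
    apply specRad_le_of hH
    · linarith
    · linarith
  · -- no edges: A = 0
    have hA0 : A = 0 := by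
      ext i j
      exact hzero i j (fun h => hE ⟨i, j, h⟩)
    have heig : ∀ i, hH.eigenvalues i = 0 := by
      intro i
      obtain ⟨x, hx1, hx2⟩ := quad_attain hH i
      have h0 : star x ⬝ᵥ A *ᵥ x = 0 := by
        rw [hA0, Matrix.zero_mulVec, dotProduct_zero]
      have := h0.symm.trans hx2
      exact_mod_cast this.symm
    have hl0 : lambdaMax A hH = 0 := by
      obtain ⟨i, hi⟩ := lambdaMax_eq_eig hH
      rw [hi, heig i]
    have hln : lambdaMax (-A) hH.neg ≤ 0 := by
      apply lambdaMax_le_of_quad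
      intro x hx
      rw [hA0]
      rw [neg_zero, Matrix.zero_mulVec, dotProduct_zero]
      simp
    have := specRad_le_of hH (le_of_eq hl0) hln
    rw [hl0]
    simpa using this

end aux

/-- If all cycles of a connected graph `G` are pairwise vertex disjoint, then every gain
matrix `A` on `G` satisfies `λ₁(A) ≤ ρ(A) ≤ 3λ₁(A)`. -/
theorem stmt_11 {V : Type*} [Fintype V] [Nonempty V] [DecidableEq V]
    (G : SimpleGraph V) (hG : G.Connected)
    (hdisj : ∀ (u v : V) (w₁ : G.Walk u u) (w₂ : G.Walk v v), w₁.IsCycle → w₂.IsCycle →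
      w₁.edges.toFinset ≠ w₂.edges.toFinset → ∀ x, x ∈ w₁.support → x ∉ w₂.support)
    (A : Matrix V V ℂ) (hA : IsGainMatrix G A) :
    lambdaMax A hA.isHermitian ≤ specRad A hA.isHermitian ∧
      specRad A hA.isHermitian ≤ 3 * lambdaMax A hA.isHermitian := by
  exact stmt_11_aux hG hdisj A hA.1 hA.2.1 hA.2.2 hA.isHermitian
end

section
/- Let G be the complete graph on the vertex set Fin 4 (i.e., G = ⊤ : SimpleGraph (Fin 4), the graph K₄). Then every gain matrix A on G satisfies λ₁(A) ≤ ρ(A) ≤ 3 · λ₁(A), where λ₁(A) is the largest eigenvalue of A and ρ(A) is the spectral radius of A. -/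
open SimpleGraph

lemma sum_eig_eq_trace {n : ℕ} (A : Matrix (Fin n) (Fin n) ℂ) (hA : A.IsHermitian) :
    (↑(∑ i, hA.eigenvalues i) : ℂ) = A.trace := by
  conv_rhs => rw [hA.spectral_theorem]
  rw [Unitary.conjStarAlgAut_apply]
  rw [Matrix.trace_mul_cycle, Unitary.coe_star_mul_self, one_mul, Matrix.trace_diagonal]
  push_cast
  rfl

/-- Every gain matrix `A` on the complete graph `K₄` satisfies
`λ₁(A) ≤ ρ(A) ≤ 3λ₁(A)`. -/
theorem stmt_12 (A : Matrix (Fin 4) (Fin 4) ℂ)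
    (hA : IsGainMatrix (⊤ : SimpleGraph (Fin 4)) A) :
    lambdaMax A hA.isHermitian ≤ specRad A hA.isHermitian ∧
      specRad A hA.isHermitian ≤ 3 * lambdaMax A hA.isHermitian := by
  set ev := hA.isHermitian.eigenvalues with hev
  have hbdd : BddAbove (Set.range ev) := Set.Finite.bddAbove (Set.finite_range ev)
  have hbdd' : BddAbove (Set.range fun i => |ev i|) :=
    Set.Finite.bddAbove (Set.finite_range _)
  have htr : A.trace = 0 := by
    rw [Matrix.trace]
    apply Finset.sum_eq_zero
    intro i _
    exact hA.2.1 i i (by simp)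
  have hsum : ∑ i, ev i = 0 := by
    have := sum_eig_eq_trace A hA.isHermitian
    rw [htr] at this
    exact_mod_cast this
  -- lambdaMax ≥ 0
  have hle1 : lambdaMax A hA.isHermitian ≤ specRad A hA.isHermitian := by
    apply ciSup_le
    intro i
    exact le_trans (le_abs_self _) (le_ciSup hbdd' i)
  have hevle : ∀ i, ev i ≤ lambdaMax A hA.isHermitian := fun i => le_ciSup hbdd i
  have hlm0 : 0 ≤ lambdaMax A hA.isHermitian := by
    by_contra h
    push_neg at h
    have : ∑ i, ev i < 0 := by
      apply Finset.sum_neg (fun i _ => lt_of_le_of_lt (hevle i) h)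
      simp
    linarith
  refine ⟨hle1, ?_⟩
  apply ciSup_le
  intro i
  rcases abs_cases (ev i) with ⟨h1, _⟩ | ⟨h1, _⟩
  · rw [h1]; linarith [hevle i]
  · rw [h1]
    have : -ev i = ∑ j ∈ Finset.univ.erase i, ev j := by
      have := Finset.add_sum_erase Finset.univ ev (Finset.mem_univ i)
      rw [hsum] at this
      linarith [this]
    rw [this]
    calc ∑ j ∈ Finset.univ.erase i, ev j
        ≤ ∑ _j ∈ Finset.univ.erase i, lambdaMax A hA.isHermitian :=
          Finset.sum_le_sum fun j _ => hevle j
      _ = 3 * lambdaMax A hA.isHermitian := by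
          rw [Finset.sum_const]
          simp [Finset.card_erase_of_mem]
end

section
/- Let G be a connected simple graph on a nonempty finite vertex set V with maximum vertex degree Δ = G.maxDegree, and let A be a gain matrix on G. Then ρ(A) = Δ if and only if G is Δ-regular and either A is balanced or -A is balanced. -/
open SimpleGraph

section Aux
set_option linter.unusedSectionVars false

variable {V : Type*} {G : SimpleGraph V} {A : Matrix V V ℂ}

@[simp] theorem gain_nil {v : V} : gainOfWalk A (Walk.nil : G.Walk v v) = 1 := rfl

@[simp] theorem gain_cons {u v w : V} (h : G.Adj u v) (p : G.Walk v w) :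
    gainOfWalk A (Walk.cons h p) = A u v * gainOfWalk A p := by
  simp [gainOfWalk, Walk.darts_cons]

theorem gain_append {u v w : V} (p : G.Walk u v) (q : G.Walk v w) :
    gainOfWalk A (p.append q) = gainOfWalk A p * gainOfWalk A q := by
  simp [gainOfWalk, Walk.darts_append]

theorem gain_reverse (hA : IsGainMatrix G A) {u v : V} (p : G.Walk u v) :
    gainOfWalk A p.reverse = (starRingEnd ℂ) (gainOfWalk A p) := by
  rw [gainOfWalk, Walk.darts_reverse, List.map_reverse, List.prod_reverse, gainOfWalk, map_list_prod]
  congr 1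
  rw [List.map_map, List.map_map]
  refine List.map_congr_left fun d _ => ?_
  exact hA.2.2 d.fst d.snd

theorem norm_gain (hA : IsGainMatrix G A) {u v : V} (p : G.Walk u v) :
    ‖gainOfWalk A p‖ = 1 := by
  rw [gainOfWalk]
  induction p with
  | nil => simp
  | cons h p ih =>
    rw [Walk.darts_cons, List.map_cons, List.prod_cons, norm_mul, ih, hA.1 _ _ h, one_mul]

theorem gain_rotate [DecidableEq V] {u v : V} (p : G.Walk v v) (h : u ∈ p.support) :
    gainOfWalk A (p.rotate u h) = gainOfWalk A p := by
  unfold gainOfWalk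
  exact ((p.rotate_darts u h).perm.map _).prod_eq

theorem gain_neg {u v : V} (p : G.Walk u v) :
    gainOfWalk (-A) p = (-1) ^ p.length * gainOfWalk A p := by
  induction p with
  | nil => simp
  | cons h p ih => simp [ih]; ring

section Closed
variable [DecidableEq V]

theorem loop_path_eq_nil {v : V} (q : G.Walk v v) (hq : q.IsPath) : q = Walk.nil := by
  cases q with
  | nil => rfl
  | cons h r =>
    exfalso
    have := hq.support_nodup
    rw [Walk.support_cons] at this
    exact (List.nodup_cons.mp this).1 r.end_mem_support

theorem closed_gain (hA : IsGainMatrix G A)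
    (hbal : ∀ (v : V) (w : G.Walk v v), w.IsCycle → gainOfWalk A w = 1) :
    ∀ (n : ℕ) (v : V) (w : G.Walk v v), w.length = n → gainOfWalk A w = 1 := by
  intro n
  induction n using Nat.strong_induction_on with
  | _ n IH =>
  intro v w hlen
  rcases Nat.eq_zero_or_pos n with h0 | hpos
  · subst h0
    rw [Walk.nil_iff_eq_nil.mp (Walk.length_eq_zero_iff.mp hlen)]
    rfl
  by_cases hnd : w.support.tail.Nodup
  · -- no interior repetition
    match n, hpos with
    | 1, _ =>
      exfalso
      cases w with
      | nil => simp at hlen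
      | cons h p =>
        rw [Walk.length_cons, Nat.add_eq_right] at hlen
        exact G.loopless.irrefl _ ((Walk.eq_of_length_eq_zero hlen) ▸ h)
    | 2, _ =>
      cases w with
      | nil => simp at hlen
      | cons h p =>
        cases p with
        | nil => simp at hlen
        | cons h' q =>
          have hq0 : q.length = 0 := by
            rw [Walk.length_cons, Walk.length_cons] at hlen; omega
          cases Walk.eq_of_length_eq_zero hq0
          rw [Walk.nil_iff_eq_nil.mp (Walk.length_eq_zero_iff.mp hq0)]
          rename_i u
          rw [gain_cons, gain_cons, gain_nil, mul_one]
          have : A u v = (starRingEnd ℂ) (A v u) := hA.2.2 v u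
          rw [this, Complex.mul_conj]
          norm_cast
          rw [Complex.normSq_eq_norm_sq]
          have := hA.1 v u h
          rw [this]; norm_num
    | (m+3), _ =>
      apply hbal
      cases w with
      | nil => simp at hlen
      | cons h p =>
        rename_i u
        rw [Walk.support_cons, List.tail_cons] at hnd
        have hpath : p.IsPath := (Walk.isPath_def p).mpr hnd
        refine ⟨⟨?_, by simp⟩, by rwa [Walk.support_cons, List.tail_cons]⟩
        rw [Walk.isTrail_cons]
        refine ⟨hpath.isTrail, fun he => ?_⟩
        cases p with
        | nil => exact G.loopless.irrefl _ h
        | cons h' q =>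
          rename_i u'
          rw [Walk.edges_cons, List.mem_cons] at he
          rcases he with he | he
          ·
            rw [Sym2.eq_iff] at he
            rcases he with ⟨hvu, _⟩ | ⟨hvu', huu⟩
            · exact G.loopless.irrefl _ (hvu ▸ h)
            · -- v = u', u = u : so u' = v, q : Walk v v is a path
              have hq : q.IsPath := by
                have := hpath.support_nodup
                rw [Walk.support_cons] at this
                exact (Walk.isPath_def q).mpr (List.nodup_cons.mp this).2
              cases hvu'
              have := loop_path_eq_nil q hq
              subst this
              rw [Walk.length_cons, Walk.length_cons, Walk.length_nil] at hlen
              omega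
          · -- s(v,u) ∈ q.edges, so u ∈ q.support, contradicting path
            have hu : u ∈ q.support := Walk.snd_mem_support_of_mem_edges q he
            have := hpath.support_nodup
            rw [Walk.support_cons] at this
            exact (List.nodup_cons.mp this).1 hu
  · -- interior repetition: rotate and split
    obtain ⟨x, hx⟩ := List.exists_duplicate_iff_not_nodup.mpr hnd
    have hxcount : 2 ≤ w.support.tail.count x := List.duplicate_iff_two_le_count.mp hx
    have hxmem : x ∈ w.support := List.mem_of_mem_tail hx.mem
    set w' := w.rotate x hxmem with hw'
    have hgain : gainOfWalk A w' = gainOfWalk A w := gain_rotate w hxmem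
    have hlen' : w'.length = n := by
      rw [← hlen, ← Walk.length_darts, ← Walk.length_darts]
      exact (w.rotate_darts x hxmem).perm.length_eq
    have hcount' : 2 ≤ w'.support.tail.count x :=
      ((w.support_rotate x hxmem).perm.count_eq x).symm ▸ hxcount
    cases hw2 : w' with
    | nil => rw [hw2] at hlen'; simp at hlen'; omega
    | cons h p =>
      rename_i z
      rw [hw2] at hcount' hgain hlen'
      rw [Walk.support_cons, List.tail_cons] at hcount'
      have hxp : x ∈ p.support := List.count_pos_iff.mp (by omega)
      set p1 := p.takeUntil x hxp
      set p2 := p.dropUntil x hxp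
      have hsplit : p1.append p2 = p := p.take_spec hxp
      have hc1 : p1.support.count x = 1 := p.count_support_takeUntil_eq_one hxp
      have hp2count : 1 ≤ p2.support.tail.count x := by
        have : p.support = p1.support ++ p2.support.tail := by
          rw [← hsplit, Walk.support_append]
        rw [this, List.count_append] at hcount'
        omega
      have hp2ne : p2.length ≠ 0 := by
        intro h0
        rw [Walk.nil_iff_eq_nil.mp (Walk.length_eq_zero_iff.mp h0)] at hp2count
        simp at hp2count
      have hlensum : (1 + p1.length) + p2.length = n := by
        rw [← hlen', Walk.length_cons, ← hsplit, Walk.length_append]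
        omega
      have g1 : gainOfWalk A (Walk.cons h p1) = 1 :=
        IH (1 + p1.length) (by omega) x (Walk.cons h p1) (by rw [Walk.length_cons]; omega)
      have g2 : gainOfWalk A p2 = 1 := IH p2.length (by omega) x p2 rfl
      rw [← hgain, gain_cons, ← hsplit, gain_append, ← mul_assoc]
      rw [gain_cons] at g1
      rw [g1, g2, one_mul]
end Closed

section Spectral
variable [Fintype V] [DecidableEq V] [DecidableRel G.Adj]

theorem re_eq_norm_imp {z : ℂ} (h : z.re = ‖z‖) : z = (‖z‖ : ℝ) := by
  have h2 : ‖z‖ ^ 2 = z.re ^ 2 + z.im ^ 2 := by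
    rw [Complex.sq_norm, Complex.normSq_apply]; ring
  have him : z.im = 0 := by
    have h4 : z.re ^ 2 = ‖z‖ ^ 2 := by rw [h]
    have h3 : z.im ^ 2 = 0 := by linarith
    exact pow_eq_zero_iff (by norm_num) |>.mp h3
  rw [← h]
  exact Complex.ext (by simp) (by simp [him])

theorem mulVec_eq_sum_neighbors (hA : IsGainMatrix G A) (x : V → ℂ) (i : V) :
    A.mulVec x i = ∑ j ∈ G.neighborFinset i, A i j * x j := by
  rw [Matrix.mulVec, dotProduct]
  refine (Finset.sum_subset (Finset.subset_univ _) fun j _ hj => ?_).symm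
  rw [SimpleGraph.mem_neighborFinset] at hj
  rw [hA.2.1 i j hj, zero_mul]

theorem key_vertex (hA : IsGainMatrix G A) {x : V → ℂ} {μ : ℝ} {M : ℝ}
    (heig : A.mulVec x = (μ : ℂ) • x) (hM : ∀ j, ‖x j‖ ≤ M)
    {v : V} (hv : ‖x v‖ = M) (hMpos : 0 < M) :
    |μ| ≤ G.maxDegree ∧ (|μ| = (G.maxDegree : ℝ) → 0 < G.maxDegree →
      G.degree v = G.maxDegree ∧ ∀ j, G.Adj v j → ‖x j‖ = M ∧
        A v j * x j = ((μ : ℂ) / (G.maxDegree : ℂ)) * x v) := by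
  set Δ : ℕ := G.maxDegree with hΔdef
  have e1 : ∑ j ∈ G.neighborFinset v, A v j * x j = (μ : ℂ) * x v := by
    have := congrFun heig v
    rwa [mulVec_eq_sum_neighbors hA, Pi.smul_apply, smul_eq_mul] at this
  have hnorm1 : ‖(μ : ℂ) * x v‖ = |μ| * M := by
    rw [norm_mul, hv, Complex.norm_real, Real.norm_eq_abs]
  have e2 : |μ| * M ≤ ∑ j ∈ G.neighborFinset v, ‖x j‖ := by
    rw [← hnorm1, ← e1]
    refine (norm_sum_le _ _).trans_eq (Finset.sum_congr rfl fun j hj => ?_)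
    rw [SimpleGraph.mem_neighborFinset] at hj
    rw [norm_mul, hA.1 v j hj, one_mul]
  have e3 : ∑ j ∈ G.neighborFinset v, ‖x j‖ ≤ (G.degree v : ℝ) * M := by
    rw [← G.card_neighborFinset_eq_degree, ← nsmul_eq_mul]
    exact Finset.sum_le_card_nsmul _ _ _ fun j _ => hM j
  have e4 : (G.degree v : ℝ) * M ≤ (Δ : ℝ) * M :=
    mul_le_mul_of_nonneg_right (Nat.cast_le.mpr (G.degree_le_maxDegree v)) hMpos.le
  constructor
  · exact le_of_mul_le_mul_right (e2.trans (e3.trans e4)) hMpos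
  intro hμ hΔpos
  rw [hμ] at e2
  have hdeg : G.degree v = Δ := by
    have h1 : (Δ : ℝ) * M ≤ (G.degree v : ℝ) * M := e2.trans e3
    have := le_of_mul_le_mul_right h1 hMpos
    exact le_antisymm (G.degree_le_maxDegree v) (by exact_mod_cast this)
  have hsum_eq : ∑ j ∈ G.neighborFinset v, ‖x j‖ = (Δ : ℝ) * M := by
    have := e3.trans_eq (by rw [hdeg])
    linarith
  have hnormM : ∀ j ∈ G.neighborFinset v, ‖x j‖ = M := by
    by_contra hcon
    push_neg at hcon
    obtain ⟨j, hjmem, hjne⟩ := hcon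
    have hlt : ∑ j ∈ G.neighborFinset v, ‖x j‖ < ∑ _j ∈ G.neighborFinset v, M :=
      Finset.sum_lt_sum (fun i _ => hM i) ⟨j, hjmem, lt_of_le_of_ne (hM j) hjne⟩
    rw [Finset.sum_const, nsmul_eq_mul, G.card_neighborFinset_eq_degree, hdeg, hsum_eq] at hlt
    exact lt_irrefl _ hlt
  -- alignment
  set c : ℂ := (starRingEnd ℂ) ((μ : ℂ) * x v) with hc
  have hcnorm : ‖c‖ = (Δ : ℝ) * M := by
    rw [hc, RCLike.norm_conj, hnorm1, hμ]
  have hcne : c ≠ 0 := by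
    intro h0
    rw [h0, norm_zero] at hcnorm
    have : (0:ℝ) < (Δ : ℝ) * M := by positivity
    linarith
  have hsum2 : ∑ j ∈ G.neighborFinset v, (c * (A v j * x j)).re = ((Δ:ℝ) * M) ^ 2 := by
    rw [← Complex.re_sum, ← Finset.mul_sum, e1, hc, mul_comm, Complex.mul_conj]
    rw [Complex.ofReal_re]
    rw [Complex.normSq_eq_norm_sq, hnorm1, hμ]
  have htermle : ∀ j ∈ G.neighborFinset v, (c * (A v j * x j)).re ≤ (Δ : ℝ) * M * M := by
    intro j hj
    rw [SimpleGraph.mem_neighborFinset] at hj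
    calc (c * (A v j * x j)).re ≤ ‖c * (A v j * x j)‖ := Complex.re_le_norm _
      _ = (Δ : ℝ) * M * M := by
          rw [norm_mul, norm_mul, hcnorm, hA.1 v j hj, one_mul,
            hnormM j (by rwa [SimpleGraph.mem_neighborFinset])]
  have hterm_eq : ∀ j ∈ G.neighborFinset v, (c * (A v j * x j)).re = (Δ : ℝ) * M * M := by
    by_contra hcon
    push_neg at hcon
    obtain ⟨j, hjmem, hjne⟩ := hcon
    have hlt : ∑ j ∈ G.neighborFinset v, (c * (A v j * x j)).re
        < ∑ _j ∈ G.neighborFinset v, (Δ : ℝ) * M * M :=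
      Finset.sum_lt_sum htermle ⟨j, hjmem, lt_of_le_of_ne (htermle j hjmem) hjne⟩
    rw [Finset.sum_const, nsmul_eq_mul, G.card_neighborFinset_eq_degree, hdeg, hsum2] at hlt
    have : ((Δ:ℝ) * M)^2 = (Δ:ℝ) * ((Δ:ℝ) * M * M) := by ring
    nlinarith
  refine ⟨hdeg, fun j hj => ?_⟩
  have hjmem : j ∈ G.neighborFinset v := by rwa [SimpleGraph.mem_neighborFinset]
  refine ⟨hnormM j hjmem, ?_⟩
  have hre : (c * (A v j * x j)).re = ‖c * (A v j * x j)‖ := by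
    rw [hterm_eq j hjmem, norm_mul, norm_mul, hcnorm, hA.1 v j hj, one_mul, hnormM j hjmem]
  have heq1 : c * (A v j * x j) = ((Δ:ℝ) * M * M : ℝ) := by
    rw [re_eq_norm_imp hre, norm_mul, norm_mul, hcnorm, hA.1 v j hj, one_mul, hnormM j hjmem]
  have heq2 : c * (((μ : ℂ) / (Δ : ℂ)) * x v) = ((Δ:ℝ) * M * M : ℝ) := by
    have hΔne : (Δ : ℂ) ≠ 0 := Nat.cast_ne_zero.mpr hΔpos.ne'
    rw [hc]
    have hconj : (starRingEnd ℂ) ((μ:ℂ) * x v) = (μ:ℂ) * (starRingEnd ℂ) (x v) := by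
      rw [map_mul, Complex.conj_ofReal]
    rw [hconj]
    have hxx : x v * (starRingEnd ℂ) (x v) = ((M:ℝ)^2 : ℝ) := by
      rw [Complex.mul_conj, Complex.normSq_eq_norm_sq, hv]
    have hr : μ * μ = ((Δ:ℝ))^2 := by rw [← abs_mul_abs_self μ, hμ]; ring
    have hμ2 : (μ:ℂ) * (μ:ℂ) = (((Δ:ℝ))^2 : ℝ) := by exact_mod_cast congrArg Complex.ofReal hr
    rw [show (μ:ℂ) * (starRingEnd ℂ) (x v) * ((μ:ℂ)/(Δ:ℂ) * x v) =
      ((μ:ℂ) * (μ:ℂ)) * (x v * (starRingEnd ℂ) (x v)) / (Δ:ℂ) by ring, hxx, hμ2,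
      div_eq_iff hΔne]
    push_cast
    ring
  exact mul_left_cancel₀ hcne (heq1.trans heq2.symm)

end Spectral

section Spectral2
variable [Fintype V] [DecidableEq V] [DecidableRel G.Adj]

theorem propagate (hA : IsGainMatrix G A) {x : V → ℂ} {μ : ℝ} {M : ℝ}
    (heig : A.mulVec x = (μ : ℂ) • x) (hM : ∀ j, ‖x j‖ ≤ M) (hMpos : 0 < M)
    (hμ : |μ| = (G.maxDegree : ℝ)) (hΔpos : 0 < G.maxDegree)
    {v₀ : V} (hv₀ : ‖x v₀‖ = M) (hG : G.Connected) :
    ∀ v, ‖x v‖ = M := by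
  suffices h : ∀ (a b : V) (w : G.Walk a b), ‖x a‖ = M → ‖x b‖ = M by
    intro v
    exact (hG.preconnected v₀ v).elim fun w => h v₀ v w hv₀
  intro a b w
  induction w with
  | nil => exact id
  | cons hadj p ih =>
    intro ha
    exact ih (((key_vertex hA heig hM ha hMpos).2 hμ hΔpos).2 _ hadj).1

theorem global_rel (hA : IsGainMatrix G A) {x : V → ℂ} {μ : ℝ} {M : ℝ}
    (heig : A.mulVec x = (μ : ℂ) • x) (hM : ∀ j, ‖x j‖ ≤ M) (hMpos : 0 < M)
    (hμ : |μ| = (G.maxDegree : ℝ)) (hΔpos : 0 < G.maxDegree)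
    (hall : ∀ v, ‖x v‖ = M) :
    G.IsRegularOfDegree G.maxDegree ∧
      ∀ i j, G.Adj i j → A i j * x j = ((μ : ℂ) / (G.maxDegree : ℂ)) * x i := by
  constructor
  · intro v
    exact ((key_vertex hA heig hM (hall v) hMpos).2 hμ hΔpos).1
  · intro i j hadj
    exact (((key_vertex hA heig hM (hall i) hMpos).2 hμ hΔpos).2 j hadj).2

theorem gain_telescope {x : V → ℂ} {c : ℂ}
    (hrel : ∀ i j, G.Adj i j → A i j * x j = c * x i) :
    ∀ (a b : V) (w : G.Walk a b), gainOfWalk A w * x b = c ^ w.length * x a := by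
  intro a b w
  induction w with
  | nil => simp
  | cons hadj p ih =>
    rename_i u u' _
    rw [gain_cons, Walk.length_cons, mul_assoc, ih, pow_succ]
    rw [show A u u' * (c ^ p.length * x u') = c ^ p.length * (A u u' * x u') by ring,
      hrel _ _ hadj]
    ring

theorem closed_gain_eq_pow {x : V → ℂ} {c : ℂ}
    (hrel : ∀ i j, G.Adj i j → A i j * x j = c * x i) (hx : ∀ v, x v ≠ 0)
    {v : V} (w : G.Walk v v) : gainOfWalk A w = c ^ w.length :=
  mul_right_cancel₀ (hx v) (gain_telescope hrel v v w)

/-- From "every closed walk has gain 1", construct a unimodular vector with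
`A i j * x j = x i` on edges. -/
theorem exists_unit_vector (hA : IsGainMatrix G A) (hG : G.Connected) [Nonempty V]
    (hclosed : ∀ (v : V) (w : G.Walk v v), gainOfWalk A w = 1) :
    ∃ x : V → ℂ, (∀ v, ‖x v‖ = 1) ∧ ∀ i j, G.Adj i j → A i j * x j = x i := by
  classical
  set r : V := Classical.arbitrary V with hr
  have hw : ∀ v, Nonempty (G.Walk r v) := fun v => (hG.preconnected r v)
  set g : V → ℂ := fun v => gainOfWalk A (hw v).some with hg
  have hgnorm : ∀ v, ‖g v‖ = 1 := fun v => norm_gain hA _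
  refine ⟨fun v => (starRingEnd ℂ) (g v), fun v => by rw [RCLike.norm_conj]; exact hgnorm v,
    fun i j hadj => ?_⟩
  have hc : gainOfWalk A (((hw i).some).append (Walk.cons hadj ((hw j).some).reverse)) = 1 :=
    hclosed r _
  rw [gain_append, gain_cons, gain_reverse hA] at hc
  -- hc : g i * (A i j * conj (g j)) = 1
  have hgi : g i * (starRingEnd ℂ) (g i) = 1 := by
    rw [Complex.mul_conj, Complex.normSq_eq_norm_sq, hgnorm i]
    norm_num
  have hgj : g j * (starRingEnd ℂ) (g j) = 1 := by
    rw [Complex.mul_conj, Complex.normSq_eq_norm_sq, hgnorm j]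
    norm_num
  calc A i j * (starRingEnd ℂ) (g j)
      = (starRingEnd ℂ) (g i) * (g i * (A i j * (starRingEnd ℂ) (g j))) := by
        rw [show (starRingEnd ℂ) (g i) * (g i * (A i j * (starRingEnd ℂ) (g j)))
          = (g i * (starRingEnd ℂ) (g i)) * (A i j * (starRingEnd ℂ) (g j)) by ring, hgi, one_mul]
    _ = (starRingEnd ℂ) (g i) := by rw [hc, mul_one]

theorem mulVec_of_unit (hA : IsGainMatrix G A) {x : V → ℂ} {Δ : ℕ}
    (hreg : G.IsRegularOfDegree Δ)
    (hrel : ∀ i j, G.Adj i j → A i j * x j = x i) :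
    A.mulVec x = ((Δ : ℝ) : ℂ) • x := by
  funext i
  rw [mulVec_eq_sum_neighbors hA, Pi.smul_apply, smul_eq_mul]
  rw [Finset.sum_congr rfl fun j hj => hrel i j ((SimpleGraph.mem_neighborFinset _ _ _).mp hj)]
  rw [Finset.sum_const, G.card_neighborFinset_eq_degree, hreg i, nsmul_eq_mul]
  norm_cast

theorem mem_eigenvalues {μ : ℝ} {x : V → ℂ} (hA : A.IsHermitian) (hx : x ≠ 0)
    (heig : A.mulVec x = ((μ : ℝ) : ℂ) • x) : ∃ i, hA.eigenvalues i = μ := by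
  have hspec : μ ∈ spectrum ℝ A := by
    rw [spectrum.mem_iff]
    intro hunit
    have hker : (algebraMap ℝ (Matrix V V ℂ) μ - A).mulVec x = 0 := by
      rw [Matrix.sub_mulVec, heig, Algebra.algebraMap_eq_smul_one]
      funext v
      simp [Matrix.smul_mulVec, Matrix.one_mulVec, Complex.real_smul]
    obtain ⟨u, hu⟩ := hunit
    apply hx
    have h1 : ((↑u⁻¹ : Matrix V V ℂ) * (↑u : Matrix V V ℂ)).mulVec x = x := by
      rw [u.inv_mul, Matrix.one_mulVec]
    rw [← h1, ← Matrix.mulVec_mulVec, hu, hker, Matrix.mulVec_zero]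
  rw [hA.spectrum_real_eq_range_eigenvalues] at hspec
  exact hspec.imp fun i hi => hi

end Spectral2

section Main
variable [Fintype V] [Nonempty V] [DecidableEq V] [DecidableRel G.Adj]

theorem eig_smul_complex (hH : A.IsHermitian) (i : V) :
    A.mulVec ⇑(hH.eigenvectorBasis i) =
      ((hH.eigenvalues i : ℝ) : ℂ) • ⇑(hH.eigenvectorBasis i) := by
  have := hH.mulVec_eigenvectorBasis i
  rw [this]
  funext v
  simp [Complex.real_smul]

theorem basis_ne_zero (hH : A.IsHermitian) (i : V) :
    ⇑(hH.eigenvectorBasis i) ≠ (0 : V → ℂ) := by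
  intro h
  apply hH.eigenvectorBasis.orthonormal.ne_zero i
  ext v
  exact congrFun h v

theorem exists_max_norm (x : V → ℂ) (hx : x ≠ 0) :
    ∃ v₀, (∀ j, ‖x j‖ ≤ ‖x v₀‖) ∧ 0 < ‖x v₀‖ := by
  obtain ⟨v₀, hv₀⟩ := Finite.exists_max fun v => ‖x v‖
  obtain ⟨v, hv⟩ := Function.ne_iff.mp hx
  exact ⟨v₀, hv₀, lt_of_lt_of_le (norm_pos_iff.mpr hv) (hv₀ v)⟩

theorem eig_abs_le (hA : IsGainMatrix G A) (i : V) :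
    |hA.isHermitian.eigenvalues i| ≤ (G.maxDegree : ℝ) := by
  obtain ⟨v₀, hM, hMpos⟩ := exists_max_norm _ (basis_ne_zero hA.isHermitian i)
  exact (key_vertex hA (eig_smul_complex hA.isHermitian i) hM rfl hMpos).1

theorem neg_gain (hA : IsGainMatrix G A) : IsGainMatrix G (-A) := by
  refine ⟨fun i j h => by rw [Matrix.neg_apply, norm_neg]; exact hA.1 i j h,
    fun i j h => by rw [Matrix.neg_apply, hA.2.1 i j h, neg_zero],
    fun i j => by rw [Matrix.neg_apply, Matrix.neg_apply, hA.2.2 i j, map_neg]⟩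

end Main

theorem stmt_13' {V : Type*} [Fintype V] [Nonempty V] [DecidableEq V]
    (G : SimpleGraph V) [DecidableRel G.Adj] (hG : G.Connected)
    (A : Matrix V V ℂ) (hA : IsGainMatrix G A) :
    specRad A hA.isHermitian = (G.maxDegree : ℝ) ↔
      (G.IsRegularOfDegree G.maxDegree ∧
        ((∀ (v : V) (w : G.Walk v v), w.IsCycle → gainOfWalk A w = 1) ∨
         (∀ (v : V) (w : G.Walk v v), w.IsCycle → gainOfWalk (-A) w = 1))) := by
  classical
  have hbdd : BddAbove (Set.range fun i => |hA.isHermitian.eigenvalues i|) :=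
    Set.Finite.bddAbove (Set.finite_range _)
  by_cases hedge : ∃ a b, G.Adj a b
  · obtain ⟨a, b, hab⟩ := hedge
    have hΔpos : 0 < G.maxDegree := by
      have h1 : 0 < G.degree a := by
        rw [← G.card_neighborFinset_eq_degree]
        exact Finset.card_pos.mpr ⟨b, (SimpleGraph.mem_neighborFinset _ _ _).mpr hab⟩
      exact lt_of_lt_of_le h1 (G.degree_le_maxDegree a)
    have hΔC : ((G.maxDegree : ℕ) : ℂ) ≠ 0 := Nat.cast_ne_zero.mpr hΔpos.ne'
    constructor
    · intro hspec
      obtain ⟨i, hi⟩ := Finite.exists_max fun i : V => |hA.isHermitian.eigenvalues i|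
      have hsup : specRad A hA.isHermitian = |hA.isHermitian.eigenvalues i| :=
        le_antisymm (ciSup_le hi) (le_ciSup hbdd i)
      have hiΔ : |hA.isHermitian.eigenvalues i| = (G.maxDegree : ℝ) := by
        rw [← hsup]; exact hspec
      have heig := eig_smul_complex hA.isHermitian i
      set y : V → ℂ := ⇑(hA.isHermitian.eigenvectorBasis i) with hy
      obtain ⟨v₀, hM, hMpos⟩ := exists_max_norm y (basis_ne_zero hA.isHermitian i)
      have hall := propagate hA heig hM hMpos hiΔ hΔpos rfl hG
      obtain ⟨hreg, hrel⟩ := global_rel hA heig hM hMpos hiΔ hΔpos hall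
      have hyne : ∀ v, y v ≠ 0 := by
        intro v h0
        have h1 := hall v
        rw [h0, norm_zero] at h1
        exact hMpos.ne' h1.symm
      refine ⟨hreg, ?_⟩
      rcases (abs_eq (by positivity : (0:ℝ) ≤ (G.maxDegree:ℝ))).mp hiΔ with hpos | hneg
      · left
        intro v w _
        rw [closed_gain_eq_pow hrel hyne w]
        have hc : ((hA.isHermitian.eigenvalues i : ℝ) : ℂ) / ((G.maxDegree : ℕ) : ℂ) = 1 := by
          rw [hpos]
          push_cast
          exact div_self hΔC
        rw [hc, one_pow]
      · right
        intro v w _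
        rw [gain_neg, closed_gain_eq_pow hrel hyne w]
        have hc : ((hA.isHermitian.eigenvalues i : ℝ) : ℂ) / ((G.maxDegree : ℕ) : ℂ) = -1 := by
          rw [hneg]
          push_cast
          rw [neg_div]
          rw [div_self hΔC]
        rw [hc, ← mul_pow]
        norm_num
    · rintro ⟨hreg, hbal | hbal⟩
      · have hclosed : ∀ (v : V) (w : G.Walk v v), gainOfWalk A w = 1 :=
          fun v w => closed_gain hA hbal w.length v w rfl
        obtain ⟨x, hxnorm, hxrel⟩ := exists_unit_vector hA hG hclosed
        have heig := mulVec_of_unit hA hreg hxrel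
        have hxne : x ≠ 0 := by
          intro h
          have := hxnorm (Classical.arbitrary V)
          simp [h] at this
        obtain ⟨i, hi⟩ := mem_eigenvalues hA.isHermitian hxne heig
        refine le_antisymm (ciSup_le fun j => eig_abs_le hA j) ?_
        calc (G.maxDegree : ℝ) = |hA.isHermitian.eigenvalues i| := by
              rw [hi]; rw [abs_of_nonneg (by positivity)]
          _ ≤ specRad A hA.isHermitian := le_ciSup hbdd i
      · have hAn := neg_gain hA
        have hclosed : ∀ (v : V) (w : G.Walk v v), gainOfWalk (-A) w = 1 :=
          fun v w => closed_gain hAn hbal w.length v w rfl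
        obtain ⟨x, hxnorm, hxrel⟩ := exists_unit_vector hAn hG hclosed
        have heig := mulVec_of_unit hAn hreg hxrel
        have heig' : A.mulVec x = ((-(G.maxDegree : ℝ) : ℝ) : ℂ) • x := by
          have h2 : -(A.mulVec x) = ((G.maxDegree : ℝ) : ℂ) • x := by
            rw [← Matrix.neg_mulVec]; exact heig
          have h3 : A.mulVec x = -(((G.maxDegree : ℝ) : ℂ) • x) := by
            rw [← h2, neg_neg]
          rw [h3]
          funext v
          push_cast
          simp [neg_mul]
        have hxne : x ≠ 0 := by
          intro h
          have := hxnorm (Classical.arbitrary V)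
          simp [h] at this
        obtain ⟨i, hi⟩ := mem_eigenvalues hA.isHermitian hxne heig'
        refine le_antisymm (ciSup_le fun j => eig_abs_le hA j) ?_
        calc (G.maxDegree : ℝ) = |hA.isHermitian.eigenvalues i| := by
              rw [hi, abs_neg, abs_of_nonneg (by positivity)]
          _ ≤ specRad A hA.isHermitian := le_ciSup hbdd i
  · -- no edges
    have hdeg0 : ∀ v, G.degree v = 0 := by
      intro v
      rw [← G.card_neighborFinset_eq_degree, Finset.card_eq_zero,
        Finset.eq_empty_iff_forall_notMem]
      intro u hu
      exact hedge ⟨v, u, (SimpleGraph.mem_neighborFinset _ _ _).mp hu⟩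
    have hΔ0 : G.maxDegree = 0 :=
      Nat.le_zero.mp (G.maxDegree_le_of_forall_degree_le 0 fun v => (hdeg0 v).le)
    have hA0 : A = 0 := by
      ext i j
      exact hA.2.1 i j (fun h => hedge ⟨i, j, h⟩)
    have heigs : ∀ i, hA.isHermitian.eigenvalues i = 0 := by
      intro i
      have h := eig_smul_complex hA.isHermitian i
      have hz : ∀ p q, A p q = 0 := fun p q => by rw [hA0]; rfl
      have h0 : A.mulVec ⇑(hA.isHermitian.eigenvectorBasis i) = 0 := by
        funext v
        simp [Matrix.mulVec, dotProduct, hz]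
      rw [h0] at h
      rcases smul_eq_zero.mp h.symm with h1 | h1
      · exact_mod_cast h1
      · exact absurd h1 (basis_ne_zero hA.isHermitian i)
    apply iff_of_true
    · rw [hΔ0, specRad]
      simp only [heigs, abs_zero, ciSup_const]
      norm_num
    · refine ⟨fun v => by rw [hdeg0 v, hΔ0], Or.inl fun v w hw => ?_⟩
      exfalso
      cases w with
      | nil => exact hw.ne_nil rfl
      | cons h p => exact hedge ⟨_, _, h⟩

end Aux

/-- For a gain matrix `A` on a connected graph `G` with maximum degree `Δ`,
`ρ(A) = Δ` iff `G` is `Δ`-regular and either `A` or `-A` is balanced. -/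
theorem stmt_13 {V : Type*} [Fintype V] [Nonempty V] [DecidableEq V]
    (G : SimpleGraph V) [DecidableRel G.Adj] (hG : G.Connected)
    (A : Matrix V V ℂ) (hA : IsGainMatrix G A) :
    specRad A hA.isHermitian = (G.maxDegree : ℝ) ↔
      (G.IsRegularOfDegree G.maxDegree ∧
        ((∀ (v : V) (w : G.Walk v v), w.IsCycle → gainOfWalk A w = 1) ∨
         (∀ (v : V) (w : G.Walk v v), w.IsCycle → gainOfWalk (-A) w = 1))) := by
  exact stmt_13' G hG A hA
end

section
/- Let X be a digraph on a nonempty finite vertex set V whose underlying graph Γ(X) is connected, let k ≥ 1 be a natural number, and let Δ = (Γ(X)).maxDegree. Then ρ(H_k(X)) = Δ if and only if Γ(X) is Δ-regular and there exists a function f : V → ZMod (2*(k+1)) such that either (Structure A) for all s, t: (E s t and E t s) implies f t = f s, and (E s t and ¬ E t s) implies f t = f s + 1; or (Structure B) for all s, t: (E s t and E t s) implies f t = f s + (k+1), and (E s t and ¬ E t s) implies f t = f s + (k+2). -/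
open SimpleGraph

/-- The `k`-generalized Hermitian adjacency matrix of a digraph given by the relation `E`. -/
noncomputable def genHermMatrix {V : Type*} (E : V → V → Prop) [DecidableRel E] (k : ℕ) :
    Matrix V V ℂ :=
  Matrix.of fun s t =>
    if E s t ∧ E t s then 1
    else if E s t ∧ ¬ E t s then Complex.exp ((Real.pi : ℂ) * Complex.I / (k + 1))
    else if ¬ E s t ∧ E t s then Complex.exp (-((Real.pi : ℂ) * Complex.I) / (k + 1))
    else 0

/-- The `k`-generalized Hermitian adjacency matrix is Hermitian. -/
theorem genHermMatrix_isHermitian {V : Type*} (E : V → V → Prop) [DecidableRel E] (k : ℕ) :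
    (genHermMatrix E k).IsHermitian := by
  ext s t
  by_cases h1 : E s t <;> by_cases h2 : E t s <;>
    simp [genHermMatrix, Matrix.conjTranspose_apply, h1, h2, ← Complex.exp_conj,
      map_div₀, Complex.conj_ofReal]

instance {V : Type*} [DecidableEq V] (E : V → V → Prop) [DecidableRel E] :
    DecidableRel (SimpleGraph.fromRel E).Adj := fun a b =>
  decidable_of_iff _ (SimpleGraph.fromRel_adj E a b).symm

namespace Stmt16Aux

noncomputable def om (k : ℕ) : ℂ := Complex.exp ((Real.pi : ℂ) * Complex.I / (k + 1))

lemma om_abs (k : ℕ) : ‖(om k)‖ = 1 := by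
  rw [om, Complex.norm_exp]
  norm_num [Complex.div_re, Complex.mul_I_re]

lemma om_ne_zero (k : ℕ) : om k ≠ 0 := Complex.exp_ne_zero _

lemma om_pow_succ (k : ℕ) : om k ^ (k + 1) = -1 := by
  have hk : ((k:ℂ)+1) ≠ 0 := Nat.cast_add_one_ne_zero k
  rw [om, ← Complex.exp_nat_mul]
  push_cast
  rw [mul_div_cancel₀ _ hk]
  exact Complex.exp_pi_mul_I

lemma om_zpow_eq_one_iff (k : ℕ) (m : ℤ) : om k ^ m = 1 ↔ (2*(k+1) : ℤ) ∣ m := by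
  have hk : ((k:ℂ)+1) ≠ 0 := Nat.cast_add_one_ne_zero k
  have hπ : (Real.pi:ℂ) ≠ 0 := by exact_mod_cast Real.pi_ne_zero
  rw [om, ← Complex.exp_int_mul, Complex.exp_eq_one_iff]
  constructor
  · rintro ⟨n, hn⟩
    refine ⟨n, ?_⟩
    field_simp at hn
    have h2 : (m : ℂ) * (Real.pi * Complex.I) = (2*(k+1)) * n * (Real.pi * Complex.I) := by
      rw [hn]; push_cast; ring
    have h3 : (m : ℂ) = ((2*(k+1) : ℤ) * n : ℤ) := by
      have := mul_right_cancel₀ (by simp [hπ, Complex.I_ne_zero]) h2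
      push_cast
      exact this
    exact_mod_cast h3
  · rintro ⟨n, rfl⟩
    refine ⟨n, ?_⟩
    push_cast
    field_simp

lemma om_zpow_eq_iff (k : ℕ) (a b : ℤ) :
    om k ^ a = om k ^ b ↔ ((a : ZMod (2*(k+1))) = (b : ZMod (2*(k+1)))) := by
  have h1 : om k ^ a = om k ^ b ↔ om k ^ (a - b) = 1 := by
    rw [zpow_sub₀ (om_ne_zero k), div_eq_one_iff_eq (zpow_ne_zero _ (om_ne_zero k))]
  have h2 : (2*((k:ℤ)+1)) = ((2*(k+1) : ℕ) : ℤ) := by push_cast; ring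
  rw [h1, om_zpow_eq_one_iff, h2, ← ZMod.intCast_zmod_eq_zero_iff_dvd, Int.cast_sub, sub_eq_zero]

lemma om_zpow_cast (k : ℕ) (a b : ℤ) (h : (a : ZMod (2*(k+1))) = (b : ZMod (2*(k+1)))) :
    om k ^ a = om k ^ b := (om_zpow_eq_iff k a b).2 h


section EntryLemmas
variable {V : Type*} (E : V → V → Prop) [DecidableRel E] (k : ℕ)

lemma om_inv (k : ℕ) : Complex.exp (-((Real.pi : ℂ) * Complex.I) / (k + 1)) = (om k)⁻¹ := by
  rw [om, ← Complex.exp_neg, neg_div]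

variable {V : Type*} (E : V → V → Prop) [DecidableRel E] (k : ℕ)

lemma H_both {s t : V} (h1 : E s t) (h2 : E t s) : genHermMatrix E k s t = 1 := by
  simp [genHermMatrix, h1, h2]

lemma H_fwd {s t : V} (h1 : E s t) (h2 : ¬ E t s) : genHermMatrix E k s t = om k := by
  simp [genHermMatrix, om, h1, h2]

lemma H_bwd {s t : V} (h1 : ¬ E s t) (h2 : E t s) : genHermMatrix E k s t = (om k)⁻¹ := by
  simp [genHermMatrix, h1, h2, om_inv]

lemma H_none {s t : V} (h1 : ¬ E s t) (h2 : ¬ E t s) : genHermMatrix E k s t = 0 := by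
  simp [genHermMatrix, h1, h2]

lemma om_abs' (k : ℕ) : ‖(om k)‖ = 1 := by
  rw [om, Complex.norm_exp]; norm_num [Complex.div_re, Complex.mul_I_re]

lemma H_abs [DecidableEq V] (hirr : Irreflexive E) (s t : V) :
    ‖(genHermMatrix E k s t)‖ = if (SimpleGraph.fromRel E).Adj s t then 1 else 0 := by
  by_cases h1 : E s t <;> by_cases h2 : E t s
  · have hne : s ≠ t := fun h => hirr s (h ▸ h1)
    rw [H_both E k h1 h2, if_pos (by simp [SimpleGraph.fromRel_adj, hne, h1])]
    simp
  · have hne : s ≠ t := fun h => hirr s (h ▸ h1)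
    rw [H_fwd E k h1 h2, if_pos (by simp [SimpleGraph.fromRel_adj, hne, h1]), om_abs']
  · have hne : s ≠ t := fun h => hirr t (h ▸ h2)
    rw [H_bwd E k h1 h2, if_pos (by simp [SimpleGraph.fromRel_adj, hne, h2]), norm_inv, om_abs']
    norm_num
  · rw [H_none E k h1 h2, if_neg (by simp [SimpleGraph.fromRel_adj, h1, h2])]
    simp



end EntryLemmas

section Spectral
open Matrix
variable {V : Type*} [Fintype V] [DecidableEq V]

lemma eig_mem (A : Matrix V V ℂ) (hA : A.IsHermitian) (x : V → ℂ) (hx : x ≠ 0)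
    (r : ℝ) (hmul : A *ᵥ x = (r : ℂ) • x) : ∃ i, hA.eigenvalues i = r := by
  have h1 : Module.End.HasEigenvalue (Matrix.toLinAlgEquiv' A) (r : ℂ) := by
    apply Module.End.hasEigenvalue_of_hasEigenvector (x := x)
    refine ⟨Module.End.mem_eigenspace_iff.mpr ?_, hx⟩
    rw [Matrix.toLinAlgEquiv'_apply, hmul]
  have h2 : (r : ℂ) ∈ spectrum ℂ A := by
    rw [← AlgEquiv.spectrum_eq Matrix.toLinAlgEquiv' A,
      ← Module.End.hasEigenvalue_iff_mem_spectrum]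
    exact h1
  have h3 : r ∈ spectrum ℝ A := by
    rw [← spectrum.algebraMap_mem_iff ℂ] at h2 ⊢
    exact h2
  rw [hA.spectrum_real_eq_range_eigenvalues] at h3
  obtain ⟨i, hi⟩ := h3
  exact ⟨i, hi⟩

lemma eig_abs_le [Nonempty V] (A : Matrix V V ℂ) (hA : A.IsHermitian) (C : ℝ)
    (hC : ∀ s, ∑ t, ‖(A s t)‖ ≤ C) (i : V) : |hA.eigenvalues i| ≤ C := by
  set x : V → ℂ := ⇑(hA.eigenvectorBasis i) with hxdef
  have hx : x ≠ 0 := fun h => hA.eigenvectorBasis.orthonormal.ne_zero i (by ext v; exact congrFun h v)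
  obtain ⟨s, -, hs⟩ := Finset.exists_max_image Finset.univ (fun t => ‖(x t)‖)
    ⟨Classical.arbitrary V, Finset.mem_univ _⟩
  have hspos : 0 < ‖(x s)‖ := by
    rcases Function.ne_iff.mp hx with ⟨t, ht⟩
    exact lt_of_lt_of_le (by simpa using ht) (hs t (Finset.mem_univ t))
  have hmul := congrFun (hA.mulVec_eigenvectorBasis i) s
  have hlhs : ‖((A *ᵥ x) s)‖ = |hA.eigenvalues i| * ‖(x s)‖ := by
    rw [hmul]
    simp [Pi.smul_apply, Complex.real_smul, norm_mul, Complex.norm_real, Real.norm_eq_abs, hxdef]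
  have hrhs : ‖((A *ᵥ x) s)‖ ≤ C * ‖(x s)‖ := by
    rw [Matrix.mulVec, dotProduct]
    calc ‖(∑ t, A s t * x t)‖ ≤ ∑ t, ‖(A s t * x t)‖ :=
          norm_sum_le _ _
      _ ≤ ∑ t, ‖(A s t)‖ * ‖(x s)‖ := by
          apply Finset.sum_le_sum
          intro t _
          rw [norm_mul]
          exact mul_le_mul_of_nonneg_left (hs t (Finset.mem_univ t)) (by positivity)
      _ = (∑ t, ‖(A s t)‖) * ‖(x s)‖ := by rw [Finset.sum_mul]
      _ ≤ C * ‖(x s)‖ := mul_le_mul_of_nonneg_right (hC s) hspos.le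
  rw [hlhs] at hrhs
  exact le_of_mul_le_mul_right hrhs hspos


end Spectral

section Graph
variable {V : Type*} [Fintype V] [DecidableEq V] (E : V → V → Prop) [DecidableRel E] (k : ℕ)

lemma H_rowsum (hirr : Irreflexive E) (s : V) :
    ∑ t, ‖(genHermMatrix E k s t)‖ = ((SimpleGraph.fromRel E).degree s : ℝ) := by
  simp only [H_abs E k hirr s]
  rw [Finset.sum_boole, SimpleGraph.degree, neighborFinset_eq_filter]

lemma sup_attained [Nonempty V] (f : V → ℝ) : ∃ i, (⨆ j, f j) = f i ∧ ∀ j, f j ≤ f i := by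
  obtain ⟨i, -, hi⟩ := Finset.exists_max_image Finset.univ f ⟨Classical.arbitrary V, Finset.mem_univ _⟩
  refine ⟨i, le_antisymm (ciSup_le fun j => hi j (Finset.mem_univ j)) (le_ciSup (Set.finite_range f).bddAbove i), fun j => hi j (Finset.mem_univ j)⟩


lemma re_eq_abs_imp {z : ℂ} (h : ‖z‖ = z.re) : z = (z.re : ℂ) := by
  have h2 : Complex.normSq z = z.re ^ 2 := by rw [← Complex.sq_norm, h]
  have h3 : z.re * z.re + z.im * z.im = z.re ^ 2 := by rw [← Complex.normSq_apply, h2]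
  have him : z.im = 0 := by nlinarith [sq_nonneg z.im]
  exact Complex.ext rfl him

lemma conj_mul_self_abs (z : ℂ) : (starRingEnd ℂ) z * z = ((‖z‖ ^ 2 : ℝ) : ℂ) := by
  rw [mul_comm, Complex.mul_conj]
  norm_cast
  rw [Complex.normSq_eq_norm_sq]

lemma key_step (hirr : Irreflexive E) {x : V → ℂ} {lam eps : ℝ}
    (heps : eps = 1 ∨ eps = -1)
    (hlam : lam = eps * ((SimpleGraph.fromRel E).maxDegree : ℝ))
    {M : ℝ} (hM : 0 < M) (hmax : ∀ t, ‖(x t)‖ ≤ M)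
    (heig : ∀ v, (lam : ℂ) * x v = ∑ t, genHermMatrix E k v t * x t)
    {s : V} (hxs : ‖(x s)‖ = M) :
    (SimpleGraph.fromRel E).degree s = (SimpleGraph.fromRel E).maxDegree ∧
      ∀ t, (SimpleGraph.fromRel E).Adj s t →
        ‖(x t)‖ = M ∧ genHermMatrix E k s t * x t = (eps : ℂ) * x s := by
  have heps2 : eps * eps = 1 := by rcases heps with h | h <;> rw [h] <;> norm_num
  have habs_eps : |eps| = 1 := by rcases heps with h | h <;> rw [h] <;> norm_num
  have hepsC : ((eps : ℂ)) * (eps : ℂ) = 1 := by exact_mod_cast heps2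
  obtain ⟨c, hc⟩ : ∃ c : ℂ, c = (eps : ℂ) * (starRingEnd ℂ) (x s) := ⟨_, rfl⟩
  have hcs : (starRingEnd ℂ) (x s) * x s = ((M ^ 2 : ℝ) : ℂ) := by
    rw [conj_mul_self_abs, hxs]
  have hc_abs : ‖c‖ = M := by
    rw [hc, norm_mul, Complex.norm_real, Real.norm_eq_abs, habs_eps, Complex.norm_conj, hxs, one_mul]
  have hc_ne : c ≠ 0 := by
    intro h; rw [h] at hc_abs; simp at hc_abs; exact hM.ne' hc_abs.symm
  have hsum : ∑ t, (c * (genHermMatrix E k s t * x t)).re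
      = ((SimpleGraph.fromRel E).maxDegree : ℝ) * M ^ 2 := by
    have h1 : ∑ t, c * (genHermMatrix E k s t * x t) = c * ((lam : ℂ) * x s) := by
      rw [← Finset.mul_sum, heig s]
    have h2 : c * ((lam : ℂ) * x s)
        = ((((SimpleGraph.fromRel E).maxDegree : ℝ) * M ^ 2 : ℝ) : ℂ) := by
      rw [hc, hlam]
      push_cast
      calc (eps : ℂ) * (starRingEnd ℂ) (x s) *
            ((eps : ℂ) * ((SimpleGraph.fromRel E).maxDegree : ℂ) * x s)
          = ((eps : ℂ) * (eps : ℂ)) * ((SimpleGraph.fromRel E).maxDegree : ℂ) *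
            ((starRingEnd ℂ) (x s) * x s) := by ring
        _ = ((SimpleGraph.fromRel E).maxDegree : ℂ) * ((M ^ 2 : ℝ) : ℂ) := by
            rw [hcs, hepsC, one_mul]
        _ = _ := by push_cast; ring
    calc ∑ t, (c * (genHermMatrix E k s t * x t)).re
        = (∑ t, c * (genHermMatrix E k s t * x t)).re := by rw [Complex.re_sum]
      _ = ((SimpleGraph.fromRel E).maxDegree : ℝ) * M ^ 2 := by rw [h1, h2, Complex.ofReal_re]
  obtain ⟨u, hu⟩ : ∃ u : V → ℝ,
      u = fun t => if (SimpleGraph.fromRel E).Adj s t then M ^ 2 else 0 := ⟨_, rfl⟩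
  have habs_le : ∀ t, ‖(c * (genHermMatrix E k s t * x t))‖ ≤ u t := by
    intro t
    rw [norm_mul, norm_mul, hc_abs, H_abs E k hirr s t, hu]
    by_cases h : (SimpleGraph.fromRel E).Adj s t
    · simp only [if_pos h]
      calc M * (1 * ‖(x t)‖) = M * ‖(x t)‖ := by ring
        _ ≤ M * M := mul_le_mul_of_nonneg_left (hmax t) hM.le
        _ = M ^ 2 := by ring
    · simp only [if_neg h]
      simp
  have hterm_le : ∀ t ∈ Finset.univ, (c * (genHermMatrix E k s t * x t)).re ≤ u t :=
    fun t _ => le_trans (Complex.re_le_norm _) (habs_le t)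
  have hu_sum : ∑ t, u t = ((SimpleGraph.fromRel E).degree s : ℝ) * M ^ 2 := by
    rw [hu, Finset.sum_ite, Finset.sum_const, Finset.sum_const_zero, add_zero, nsmul_eq_mul,
      SimpleGraph.degree, neighborFinset_eq_filter]
  have hdeg_le : ((SimpleGraph.fromRel E).degree s : ℝ)
      ≤ ((SimpleGraph.fromRel E).maxDegree : ℝ) := by
    exact_mod_cast (SimpleGraph.fromRel E).degree_le_maxDegree s
  have hsandwich : ∑ t, u t = ((SimpleGraph.fromRel E).maxDegree : ℝ) * M ^ 2 := by
    have hle1 : ((SimpleGraph.fromRel E).maxDegree : ℝ) * M ^ 2 ≤ ∑ t, u t := by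
      rw [← hsum]; exact Finset.sum_le_sum hterm_le
    have hle2 : ∑ t, u t ≤ ((SimpleGraph.fromRel E).maxDegree : ℝ) * M ^ 2 := by
      rw [hu_sum]
      exact mul_le_mul_of_nonneg_right hdeg_le (by positivity)
    linarith
  have hdeg : (SimpleGraph.fromRel E).degree s = (SimpleGraph.fromRel E).maxDegree := by
    have h1 : ((SimpleGraph.fromRel E).degree s : ℝ) * M ^ 2
        = ((SimpleGraph.fromRel E).maxDegree : ℝ) * M ^ 2 := by rw [← hu_sum, hsandwich]
    have hM2 : (0:ℝ) < M ^ 2 := by positivity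
    have h2 := mul_right_cancel₀ hM2.ne' h1
    exact_mod_cast h2
  have htermeq : ∀ t ∈ Finset.univ, (c * (genHermMatrix E k s t * x t)).re = u t := by
    rw [← Finset.sum_eq_sum_iff_of_le hterm_le, hsum, hsandwich]
  refine ⟨hdeg, fun t hadj => ?_⟩
  have hzre : (c * (genHermMatrix E k s t * x t)).re = M ^ 2 := by
    have h1 := htermeq t (Finset.mem_univ t)
    simp only [hu] at h1
    rwa [if_pos hadj] at h1
  have hzabs_le : ‖(c * (genHermMatrix E k s t * x t))‖ ≤ M ^ 2 := by
    have h1 := habs_le t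
    simp only [hu] at h1
    rwa [if_pos hadj] at h1
  have hzabs : ‖(c * (genHermMatrix E k s t * x t))‖ = M ^ 2 :=
    le_antisymm hzabs_le (by rw [← hzre]; exact Complex.re_le_norm _)
  have hxt : ‖(x t)‖ = M := by
    have h1 : ‖(c * (genHermMatrix E k s t * x t))‖ = M * ‖(x t)‖ := by
      rw [norm_mul, norm_mul, hc_abs, H_abs E k hirr s t, if_pos hadj,
        one_mul]
    rw [hzabs] at h1
    exact (mul_left_cancel₀ hM.ne' (h1.symm.trans (by ring : M ^ 2 = M * M)))
  refine ⟨hxt, ?_⟩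
  have hz_eq : c * (genHermMatrix E k s t * x t) = ((M ^ 2 : ℝ) : ℂ) := by
    have h1 := re_eq_abs_imp (z := c * (genHermMatrix E k s t * x t)) (by rw [hzabs, hzre])
    rw [h1, hzre]
  apply mul_left_cancel₀ hc_ne
  rw [hz_eq, hc]
  calc ((M ^ 2 : ℝ) : ℂ) = ((eps : ℂ) * (eps : ℂ)) * ((starRingEnd ℂ) (x s) * x s) := by
        rw [hcs, hepsC, one_mul]
    _ = (eps : ℂ) * (starRingEnd ℂ) (x s) * ((eps : ℂ) * x s) := by ring


end Graph

section Main
variable {V : Type*} [Fintype V] [Nonempty V] [DecidableEq V]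
  (E : V → V → Prop) [DecidableRel E] (k : ℕ)

/-- The main forward construction: from a maximal-modulus eigenvector equation, derive
regularity and the potential function. -/
lemma forward_main (hirr : Irreflexive E) (hconn : (SimpleGraph.fromRel E).Connected)
    {x : V → ℂ} (hx : x ≠ 0) {lam eps : ℝ} (heps : eps = 1 ∨ eps = -1)
    (hlam : lam = eps * ((SimpleGraph.fromRel E).maxDegree : ℝ))
    (heig : ∀ v, (lam : ℂ) * x v = ∑ t, genHermMatrix E k v t * x t) :
    ((SimpleGraph.fromRel E).IsRegularOfDegree (SimpleGraph.fromRel E).maxDegree ∧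
        ∃ f : V → ZMod (2 * (k + 1)),
          (∀ s t, (E s t ∧ E t s → f t = f s) ∧ (E s t ∧ ¬ E t s → f t = f s + 1)) ∨
          (∀ s t, (E s t ∧ E t s → f t = f s + ((k : ZMod (2 * (k + 1))) + 1)) ∧
            (E s t ∧ ¬ E t s → f t = f s + ((k : ZMod (2 * (k + 1))) + 2)))) := by
  obtain ⟨s0, -, hs0max⟩ := Finset.exists_max_image Finset.univ (fun t => ‖(x t)‖)
    ⟨Classical.arbitrary V, Finset.mem_univ _⟩
  have hmax : ∀ t, ‖(x t)‖ ≤ ‖(x s0)‖ := fun t => hs0max t (Finset.mem_univ t)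
  have hM : 0 < ‖(x s0)‖ := by
    rcases Function.ne_iff.mp hx with ⟨t, ht⟩
    exact lt_of_lt_of_le (by simpa using ht) (hmax t)
  have hkeyat : ∀ s, ‖(x s)‖ = ‖(x s0)‖ →
      (SimpleGraph.fromRel E).degree s = (SimpleGraph.fromRel E).maxDegree ∧
      ∀ t, (SimpleGraph.fromRel E).Adj s t →
        ‖(x t)‖ = ‖(x s0)‖ ∧
        genHermMatrix E k s t * x t = (eps : ℂ) * x s :=
    fun s hs => key_step E k hirr heps hlam hM hmax heig hs
  have hwalk : ∀ (u v : V) (w : (SimpleGraph.fromRel E).Walk u v),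
      ‖(x u)‖ = ‖(x s0)‖ → ‖(x v)‖ = ‖(x s0)‖ := by
    intro u v w
    induction w with
    | nil => exact id
    | cons hab p ih => exact fun hu => ih (((hkeyat _ hu).2 _ hab).1)
  have hall : ∀ v, ‖(x v)‖ = ‖(x s0)‖ := fun v =>
    hwalk s0 v (hconn.preconnected s0 v).some rfl
  have hreg : (SimpleGraph.fromRel E).IsRegularOfDegree (SimpleGraph.fromRel E).maxDegree :=
    fun v => (hkeyat v (hall v)).1
  have hgain : ∀ s t, (SimpleGraph.fromRel E).Adj s t →
      genHermMatrix E k s t * x t = (eps : ℂ) * x s :=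
    fun s t h => ((hkeyat s (hall s)).2 t h).2
  refine ⟨hreg, ?_⟩
  -- the value eps as a power of om
  obtain ⟨eE, heE⟩ : ∃ eE : ℤ, (eps : ℂ) = om k ^ eE ∧ (eps = 1 → eE = 0) ∧
      (eps = -1 → eE = (k+1 : ℤ)) := by
    rcases heps with h | h
    · exact ⟨0, by rw [h]; norm_num, fun _ => rfl, fun h' => by rw [h] at h'; norm_num at h'⟩
    · refine ⟨(k+1 : ℤ), ?_, fun h' => by rw [h] at h'; norm_num at h', fun _ => rfl⟩
      rw [h]
      have : om k ^ ((k+1 : ℕ) : ℤ) = om k ^ (k+1 : ℕ) := zpow_natCast _ _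
      rw [show ((k:ℤ)+1) = ((k+1 : ℕ) : ℤ) by push_cast; ring, this, om_pow_succ]
      norm_num
  obtain ⟨heE1, heE2, heE3⟩ := heE
  have hx0 : x s0 ≠ 0 := fun h => by rw [h] at hM; simp at hM
  -- the entry of H as a power of om
  have hHpow : ∀ s t, (SimpleGraph.fromRel E).Adj s t →
      ∃ a : ℤ, genHermMatrix E k s t = om k ^ a ∧
        (E s t → E t s → a = 0) ∧ (E s t → ¬ E t s → a = 1) := by
    intro s t hadj
    rw [SimpleGraph.fromRel_adj] at hadj
    by_cases h1 : E s t <;> by_cases h2 : E t s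
    · exact ⟨0, by rw [H_both E k h1 h2]; norm_num, fun _ _ => rfl, fun _ h => absurd h2 h⟩
    · exact ⟨1, by rw [H_fwd E k h1 h2]; norm_num, fun _ h => absurd h h2, fun _ _ => rfl⟩
    · exact ⟨-1, by rw [H_bwd E k h1 h2, _root_.zpow_neg_one], fun h _ => absurd h h1,
        fun h _ => absurd h h1⟩
    · exact absurd hadj (by simp [h1, h2])
  -- cancel powers of om
  have hcancel : ∀ (a b : ℤ) (z w : ℂ), z ≠ 0 → om k ^ a * z = om k ^ b * w →
      w = om k ^ (a - b) * z := by
    intro a b z w hz h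
    have h1 : w = om k ^ (-b) * (om k ^ b * w) := by
      rw [← mul_assoc, ← zpow_add₀ (om_ne_zero k), neg_add_cancel, zpow_zero, one_mul]
    rw [h1, ← h, ← mul_assoc, ← zpow_add₀ (om_ne_zero k), show -b + a = a - b by ring]
  -- the gain of each vertex relative to s0
  have hexists : ∀ v, ∃ m : ℤ, x v = om k ^ m * x s0 := by
    have hstep : ∀ s t, (SimpleGraph.fromRel E).Adj s t →
        (∃ m : ℤ, x s = om k ^ m * x s0) → ∃ m : ℤ, x t = om k ^ m * x s0 := by
      rintro s t hadj ⟨m, hm⟩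
      obtain ⟨a, ha, -, -⟩ := hHpow s t hadj
      have hgn := hgain s t hadj
      rw [ha, heE1, hm, ← mul_assoc, ← zpow_add₀ (om_ne_zero k)] at hgn
      exact ⟨eE + m - a, hcancel (eE + m) a (x s0) (x t) hx0 hgn.symm⟩
    intro v
    have hwalk2 : ∀ (u v : V) (w : (SimpleGraph.fromRel E).Walk u v),
        (∃ m : ℤ, x u = om k ^ m * x s0) → ∃ m : ℤ, x v = om k ^ m * x s0 := by
      intro u v w
      induction w with
      | nil => exact id
      | cons hab p ih => exact fun hu => ih (hstep _ _ hab hu)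
    exact hwalk2 s0 v (hconn.preconnected s0 v).some ⟨0, by rw [zpow_zero, one_mul]⟩
  obtain ⟨g, hg⟩ := Classical.axiomOfChoice hexists
  -- the potential function
  refine ⟨fun v => ((-(g v) : ℤ) : ZMod (2*(k+1))), ?_⟩
  have hrel : ∀ s t, (SimpleGraph.fromRel E).Adj s t → ∀ a : ℤ,
      genHermMatrix E k s t = om k ^ a →
      ((-(g t) : ℤ) : ZMod (2*(k+1))) = ((-(g s) : ℤ) : ZMod (2*(k+1)))
        + (((a - eE : ℤ)) : ZMod (2*(k+1))) := by
    intro s t hadj a ha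
    have hgn := hgain s t hadj
    rw [ha, heE1, hg s, hg t, ← mul_assoc, ← mul_assoc,
      ← zpow_add₀ (om_ne_zero k), ← zpow_add₀ (om_ne_zero k)] at hgn
    have h2 : om k ^ (a + g t) = om k ^ (eE + g s) := mul_right_cancel₀ hx0 hgn
    have h3 := (om_zpow_eq_iff k _ _).1 h2
    have h4 : ((a : ZMod (2*(k+1))) + (g t : ZMod (2*(k+1))))
        = ((eE : ZMod (2*(k+1))) + (g s : ZMod (2*(k+1)))) := by push_cast at h3; exact h3
    push_cast
    linear_combination -h4
  have hAdj_of_E : ∀ s t, E s t → (SimpleGraph.fromRel E).Adj s t := by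
    intro s t h
    rw [SimpleGraph.fromRel_adj]
    exact ⟨fun he => hirr s (he ▸ h), Or.inl h⟩
  rcases heps with hE1 | hE1
  · left
    intro s t
    have heE0 : eE = 0 := heE2 hE1
    constructor
    · rintro ⟨h1, h2⟩
      obtain ⟨a, ha, hb, -⟩ := hHpow s t (hAdj_of_E s t h1)
      have := hrel s t (hAdj_of_E s t h1) a ha
      rw [hb h1 h2, heE0] at this
      simpa using this
    · rintro ⟨h1, h2⟩
      obtain ⟨a, ha, -, hb⟩ := hHpow s t (hAdj_of_E s t h1)
      have := hrel s t (hAdj_of_E s t h1) a ha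
      rw [hb h1 h2, heE0] at this
      simpa using this
  · right
    intro s t
    have heE0 : eE = (k+1 : ℤ) := heE3 hE1
    constructor
    · rintro ⟨h1, h2⟩
      obtain ⟨a, ha, hb, -⟩ := hHpow s t (hAdj_of_E s t h1)
      have := hrel s t (hAdj_of_E s t h1) a ha
      rw [hb h1 h2, heE0] at this
      have h0 : ((2*(k+1) : ℕ) : ZMod (2*(k+1))) = 0 := ZMod.natCast_self _
      beta_reduce
      rw [this]
      push_cast at h0 ⊢
      linear_combination -h0
    · rintro ⟨h1, h2⟩
      obtain ⟨a, ha, -, hb⟩ := hHpow s t (hAdj_of_E s t h1)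
      have := hrel s t (hAdj_of_E s t h1) a ha
      rw [hb h1 h2, heE0] at this
      have h0 : ((2*(k+1) : ℕ) : ZMod (2*(k+1))) = 0 := ZMod.natCast_self _
      beta_reduce
      rw [this]
      push_cast at h0 ⊢
      linear_combination -h0

lemma reverse_gen (hirr : Irreflexive E)
    (hreg : (SimpleGraph.fromRel E).IsRegularOfDegree (SimpleGraph.fromRel E).maxDegree)
    (f : V → ZMod (2*(k+1))) (e : ℤ) (eps : ℝ)
    (heps1 : (eps : ℂ) = om k ^ (-e)) (heps2 : (eps : ℂ) = om k ^ e)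
    (hf : ∀ s t, (E s t ∧ E t s → f t = f s + ((e : ℤ) : ZMod (2*(k+1)))) ∧
      (E s t ∧ ¬ E t s → f t = f s + (((e+1) : ℤ) : ZMod (2*(k+1))))) :
    ∃ x : V → ℂ, x ≠ 0 ∧
      ∀ v, ∑ t, genHermMatrix E k v t * x t
        = ((eps * ((SimpleGraph.fromRel E).maxDegree : ℝ) : ℝ) : ℂ) * x v := by
  haveI : NeZero (2*(k+1)) := ⟨by positivity⟩
  refine ⟨fun v => om k ^ (-(((f v).val : ℕ) : ℤ)), ?_, ?_⟩
  · intro h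
    have := congrFun h (Classical.arbitrary V)
    exact zpow_ne_zero _ (om_ne_zero k) (by simpa using this)
  · set x : V → ℂ := fun v => om k ^ (-(((f v).val : ℕ) : ℤ)) with hxdef
    have hcong : ∀ a b : ℤ, ((a : ZMod (2*(k+1))) = (b : ZMod (2*(k+1)))) →
        om k ^ a = om k ^ b := fun a b h => (om_zpow_eq_iff k a b).2 h
    have hkey : ∀ v w (c : ℤ), f w = f v + ((c : ℤ) : ZMod (2*(k+1))) →
        x w = om k ^ (-c) * x v := by
      intro v w c h
      rw [hxdef]
      beta_reduce
      rw [← zpow_add₀ (om_ne_zero k)]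
      apply hcong
      push_cast
      rw [ZMod.natCast_val, ZMod.natCast_val, ZMod.cast_id, ZMod.cast_id, h]
      ring
    have hflip : ∀ (a : ℤ) (z w : ℂ), z = om k ^ a * w → w = om k ^ (-a) * z := by
      intro a z w h
      rw [h, ← mul_assoc, ← zpow_add₀ (om_ne_zero k), neg_add_cancel, zpow_zero, one_mul]
    have hterm : ∀ s t, genHermMatrix E k s t * x t
        = if (SimpleGraph.fromRel E).Adj s t then (eps : ℂ) * x s else 0 := by
      intro s t
      by_cases h1 : E s t <;> by_cases h2 : E t s
      · have hadj : (SimpleGraph.fromRel E).Adj s t := by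
          rw [SimpleGraph.fromRel_adj]; exact ⟨fun he => hirr s (he ▸ h1), Or.inl h1⟩
        rw [if_pos hadj, H_both E k h1 h2, one_mul, hkey s t e ((hf s t).1 ⟨h1, h2⟩), ← heps1]
      · have hadj : (SimpleGraph.fromRel E).Adj s t := by
          rw [SimpleGraph.fromRel_adj]; exact ⟨fun he => hirr s (he ▸ h1), Or.inl h1⟩
        have hcomb := (zpow_add₀ (om_ne_zero k) 1 (-(e+1))).symm
        rw [zpow_one, show (1:ℤ) + -(e+1) = -e by ring] at hcomb
        rw [if_pos hadj, H_fwd E k h1 h2, hkey s t (e+1) ((hf s t).2 ⟨h1, h2⟩), ← mul_assoc,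
          hcomb, ← heps1]
      · have hadj : (SimpleGraph.fromRel E).Adj s t := by
          rw [SimpleGraph.fromRel_adj]; exact ⟨fun he => hirr t (he ▸ h2), Or.inr h2⟩
        have hst := hflip _ _ _ (hkey t s (e+1) ((hf t s).2 ⟨h2, h1⟩))
        rw [neg_neg] at hst
        have hcomb := (zpow_add₀ (om_ne_zero k) (-1) (e+1)).symm
        rw [_root_.zpow_neg_one, show (-1:ℤ) + (e+1) = e by ring] at hcomb
        rw [if_pos hadj, H_bwd E k h1 h2, hst, ← mul_assoc, hcomb, ← heps2]
      · rw [H_none E k h1 h2, zero_mul, if_neg (by simp [SimpleGraph.fromRel_adj, h1, h2])]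
    intro v
    rw [Finset.sum_congr rfl (fun t _ => hterm v t)]
    rw [Finset.sum_ite, Finset.sum_const, Finset.sum_const_zero, add_zero, nsmul_eq_mul]
    have hdeg : (Finset.filter (fun t => (SimpleGraph.fromRel E).Adj v t) Finset.univ).card
        = (SimpleGraph.fromRel E).maxDegree := by
      rw [← neighborFinset_eq_filter, ← SimpleGraph.degree]
      exact hreg v
    rw [hdeg]
    push_cast
    ring


end Main

end Stmt16Aux

/-- Characterization of digraphs whose `k`-generalized Hermitian adjacency matrix has
spectral radius equal to the maximum degree of the underlying graph. -/
theorem stmt_16 {V : Type*} [Fintype V] [Nonempty V] [DecidableEq V]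
    (E : V → V → Prop) [DecidableRel E] (hirr : Irreflexive E)
    (k : ℕ) (hk : 1 ≤ k) (hconn : (SimpleGraph.fromRel E).Connected) :
    specRad (genHermMatrix E k) (genHermMatrix_isHermitian E k) =
        ((SimpleGraph.fromRel E).maxDegree : ℝ) ↔
      ((SimpleGraph.fromRel E).IsRegularOfDegree (SimpleGraph.fromRel E).maxDegree ∧
        ∃ f : V → ZMod (2 * (k + 1)),
          (∀ s t, (E s t ∧ E t s → f t = f s) ∧ (E s t ∧ ¬ E t s → f t = f s + 1)) ∨
          (∀ s t, (E s t ∧ E t s → f t = f s + ((k : ZMod (2 * (k + 1))) + 1)) ∧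
            (E s t ∧ ¬ E t s → f t = f s + ((k : ZMod (2 * (k + 1))) + 2)))) := by
  classical
  have hA := genHermMatrix_isHermitian E k
  have hDnn : (0:ℝ) ≤ ((SimpleGraph.fromRel E).maxDegree : ℝ) := Nat.cast_nonneg _
  constructor
  · intro h
    obtain ⟨i, hi1, hi2⟩ := Stmt16Aux.sup_attained
      (fun j => |(genHermMatrix_isHermitian E k).eigenvalues j|)
    have habs : |(genHermMatrix_isHermitian E k).eigenvalues i|
        = ((SimpleGraph.fromRel E).maxDegree : ℝ) := by
      rw [← h, specRad, hi1]
    -- the eigenvector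
    have hx : (fun v => ((genHermMatrix_isHermitian E k).eigenvectorBasis i) v) ≠ (0 : V → ℂ) := by
      intro hcontra
      apply (genHermMatrix_isHermitian E k).eigenvectorBasis.orthonormal.ne_zero i
      ext v
      exact congrFun hcontra v
    have heig : ∀ v, (((genHermMatrix_isHermitian E k).eigenvalues i : ℝ) : ℂ)
        * ((genHermMatrix_isHermitian E k).eigenvectorBasis i) v
        = ∑ t, genHermMatrix E k v t
          * ((genHermMatrix_isHermitian E k).eigenvectorBasis i) t := by
      intro v
      have h1 := congrFun ((genHermMatrix_isHermitian E k).mulVec_eigenvectorBasis i) v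
      rw [Matrix.mulVec, dotProduct, Pi.smul_apply, Complex.real_smul] at h1
      exact h1.symm
    rcases (abs_eq hDnn).1 habs with hlam | hlam
    · exact Stmt16Aux.forward_main E k hirr hconn hx (Or.inl rfl)
        (by rw [hlam, one_mul]) heig
    · exact Stmt16Aux.forward_main E k hirr hconn hx (Or.inr rfl)
        (by rw [hlam]; ring) heig
  · rintro ⟨hreg, f, hf | hf⟩
    · -- structure A : eps = 1, e = 0
      obtain ⟨x, hx0, heq⟩ := Stmt16Aux.reverse_gen E k hirr hreg f 0 1
        (by norm_num) (by norm_num)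
        (by
          intro s t
          refine ⟨fun hst => ?_, fun hst => ?_⟩
          · rw [(hf s t).1 hst]; norm_num
          · rw [(hf s t).2 hst]; norm_num)
      refine le_antisymm ?_ ?_
      · apply ciSup_le
        intro j
        apply Stmt16Aux.eig_abs_le (genHermMatrix E k) (genHermMatrix_isHermitian E k)
        intro s
        rw [Stmt16Aux.H_rowsum E k hirr s]
        exact_mod_cast (SimpleGraph.fromRel E).degree_le_maxDegree s
      · obtain ⟨j, hj⟩ := Stmt16Aux.eig_mem (genHermMatrix E k) (genHermMatrix_isHermitian E k)
          x hx0 (1 * ((SimpleGraph.fromRel E).maxDegree : ℝ))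
          (by
            funext v
            rw [Matrix.mulVec, dotProduct, heq v]
            simp [Complex.real_smul])
        calc ((SimpleGraph.fromRel E).maxDegree : ℝ)
            = |(genHermMatrix_isHermitian E k).eigenvalues j| := by
              rw [hj]; rw [one_mul, abs_of_nonneg hDnn]
          _ ≤ specRad (genHermMatrix E k) (genHermMatrix_isHermitian E k) := by
              apply le_ciSup (Set.finite_range
                (fun j => |(genHermMatrix_isHermitian E k).eigenvalues j|)).bddAbove j
    · -- structure B : eps = -1, e = k + 1
      have hom1 : Stmt16Aux.om k ^ ((k:ℤ)+1) = -1 := by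
        have h1 : Stmt16Aux.om k ^ (((k+1 : ℕ)) : ℤ) = Stmt16Aux.om k ^ (k+1 : ℕ) :=
          zpow_natCast _ _
        rw [show ((k:ℤ)+1) = (((k+1 : ℕ)) : ℤ) by push_cast; ring, h1, Stmt16Aux.om_pow_succ]
      obtain ⟨x, hx0, heq⟩ := Stmt16Aux.reverse_gen E k hirr hreg f ((k:ℤ)+1) (-1)
        (by rw [zpow_neg, hom1]; norm_num) (by rw [hom1]; norm_num)
        (by
          intro s t
          refine ⟨fun hst => ?_, fun hst => ?_⟩
          · rw [(hf s t).1 hst]; push_cast; ring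
          · rw [(hf s t).2 hst]; push_cast; ring)
      refine le_antisymm ?_ ?_
      · apply ciSup_le
        intro j
        apply Stmt16Aux.eig_abs_le (genHermMatrix E k) (genHermMatrix_isHermitian E k)
        intro s
        rw [Stmt16Aux.H_rowsum E k hirr s]
        exact_mod_cast (SimpleGraph.fromRel E).degree_le_maxDegree s
      · obtain ⟨j, hj⟩ := Stmt16Aux.eig_mem (genHermMatrix E k) (genHermMatrix_isHermitian E k)
          x hx0 ((-1) * ((SimpleGraph.fromRel E).maxDegree : ℝ))
          (by
            funext v
            rw [Matrix.mulVec, dotProduct, heq v]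
            simp [Complex.real_smul])
        calc ((SimpleGraph.fromRel E).maxDegree : ℝ)
            = |(genHermMatrix_isHermitian E k).eigenvalues j| := by
              rw [hj]; rw [abs_mul, abs_neg, abs_one, one_mul, abs_of_nonneg hDnn]
          _ ≤ specRad (genHermMatrix E k) (genHermMatrix_isHermitian E k) := by
              apply le_ciSup (Set.finite_range
                (fun j => |(genHermMatrix_isHermitian E k).eigenvalues j|)).bddAbove j
end

section
/- Let X be a digraph on a nonempty finite vertex set V whose underlying graph Γ(X) is connected, and let k ≥ 1 be a natural number. Then H_k(X) is balanced, i.e., every cycle of Γ(X) has gain 1 under H_k(X), if and only if there exists a function f : V → ZMod (2*(k+1)) such that for all s, t: (E s t and E t s) implies f t = f s, and (E s t and ¬ E t s) implies f t = f s + 1. -/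
open SimpleGraph

namespace Stmt17Aux

set_option linter.unusedSectionVars false


variable {V : Type*} [DecidableEq V] {G : SimpleGraph V}

/-- Sum of a weight function along the darts of a walk. -/
def wsum (φ : V → V → ℤ) {u v : V} (w : G.Walk u v) : ℤ :=
  (w.darts.map fun d => φ d.fst d.snd).sum

@[simp] lemma wsum_nil (φ : V → V → ℤ) {u : V} :
    wsum φ (Walk.nil : G.Walk u u) = 0 := rfl

@[simp] lemma wsum_cons (φ : V → V → ℤ) {u v x : V} (h : G.Adj u v) (p : G.Walk v x) :
    wsum φ (Walk.cons h p) = φ u v + wsum φ p := by simp [wsum]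

@[simp] lemma wsum_append (φ : V → V → ℤ) {u v x : V} (p : G.Walk u v) (q : G.Walk v x) :
    wsum φ (p.append q) = wsum φ p + wsum φ q := by
  induction p with
  | nil => simp
  | cons h p ih => simp [ih]; ring

lemma wsum_reverse (φ : V → V → ℤ) (hanti : ∀ s t, φ t s = - φ s t) {u v : V}
    (w : G.Walk u v) : wsum φ w.reverse = - wsum φ w := by
  induction w with
  | nil => simp
  | cons h p ih =>
    rw [Walk.reverse_cons, wsum_append, ih, wsum_cons, wsum_nil, hanti, wsum_cons]
    ring

lemma conserve (φ : V → V → ℤ) (hanti : ∀ s t, φ t s = - φ s t) (m : ℤ)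
    (hcyc : ∀ (v : V) (w : G.Walk v v), w.IsCycle → m ∣ wsum φ w) :
    ∀ (n : ℕ) (v : V) (w : G.Walk v v), w.length = n → m ∣ wsum φ w := by
  intro n
  induction n using Nat.strong_induction_on with
  | _ n ih =>
    intro v w hlen
    cases w with
    | nil => simp
    | @cons _ x _ h p =>
      by_cases hp : p.IsPath
      · by_cases he : s(v, x) ∈ p.edges
        · -- the first edge is retraced immediately
          cases p with
          | nil => simp at he
          | @cons _ y _ h₂ p₂ =>
            rw [Walk.edges_cons, List.mem_cons] at he
            rcases he with he | he
            · rcases Sym2.eq_iff.mp he with ⟨rfl, rfl⟩ | ⟨rfl, -⟩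
              · exact absurd rfl h.ne
              · have heq : wsum φ (Walk.cons h (Walk.cons h₂ p₂)) = wsum φ p₂ := by
                  rw [wsum_cons, wsum_cons, hanti]; ring
                rw [heq]
                exact ih p₂.length (by simp [Walk.length_cons] at hlen; omega) _ p₂ rfl
            · exfalso
              have hx : x ∈ p₂.support := Walk.snd_mem_support_of_mem_edges p₂ he
              have hnd := hp.support_nodup
              rw [Walk.support_cons, List.nodup_cons] at hnd
              exact hnd.1 hx
        · -- it is a cycle
          exact hcyc v _ ((Walk.cons_isCycle_iff p h).mpr ⟨hp, he⟩)
      · -- support of p has a duplicate: excise a closed subwalk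
        have hnd : ¬ p.support.Nodup := fun hnd => hp (Walk.IsPath.mk' hnd)
        obtain ⟨u, hdup⟩ := List.exists_duplicate_iff_not_nodup.mpr hnd
        have hu : u ∈ p.support := hdup.mem
        have hcount : 2 ≤ p.support.count u := List.duplicate_iff_two_le_count.mp hdup
        have hspec := p.take_spec hu
        have hq1 : (p.takeUntil u hu).support.count u = 1 :=
          p.count_support_takeUntil_eq_one hu
        have hur : u ∈ (p.dropUntil u hu).support.tail := by
          have hsupp : p.support =
              (p.takeUntil u hu).support ++ (p.dropUntil u hu).support.tail := by
            conv_lhs => rw [← hspec]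
            rw [Walk.support_append]
          rw [← List.count_pos_iff]
          rw [hsupp, List.count_append, hq1] at hcount
          omega
        have hlenqr : (p.takeUntil u hu).length + (p.dropUntil u hu).length = p.length := by
          have h5 := congrArg Walk.length hspec
          rwa [Walk.length_append] at h5
        have hpsum : wsum φ p = wsum φ (p.takeUntil u hu) + wsum φ (p.dropUntil u hu) := by
          conv_lhs => rw [← hspec]
          rw [wsum_append]
        revert hur hlenqr hpsum
        cases hr : p.dropUntil u hu with
        | nil => intro h1 _ _; simp at h1
        | @cons _ y _ h₂ r₂ =>
          intro hur hlenqr hpsum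
          rw [Walk.support_cons, List.tail_cons] at hur
          have hspec₂ := r₂.take_spec hur
          have hlen₂ : (r₂.takeUntil u hur).length + (r₂.dropUntil u hur).length
              = r₂.length := by
            have h5 := congrArg Walk.length hspec₂
            rwa [Walk.length_append] at h5
          have hr₂sum : wsum φ r₂
              = wsum φ (r₂.takeUntil u hur) + wsum φ (r₂.dropUntil u hur) := by
            conv_lhs => rw [← hspec₂]
            rw [wsum_append]
          have hwsum : wsum φ (Walk.cons h p)
              = wsum φ (Walk.cons h ((p.takeUntil u hu).append (r₂.dropUntil u hur)))
                + wsum φ (Walk.cons h₂ (r₂.takeUntil u hur)) := by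
            simp only [wsum_cons, wsum_append]
            rw [hpsum, wsum_cons, hr₂sum]
            ring
          rw [Walk.length_cons] at hlen
          rw [Walk.length_cons] at hlenqr
          rw [hwsum]
          refine dvd_add (ih _ ?_ v _ rfl) (ih _ ?_ u _ rfl)
          · rw [Walk.length_cons, Walk.length_append]
            omega
          · rw [Walk.length_cons]
            omega


def phiE {V : Type*} (E : V → V → Prop) [DecidableRel E] (s t : V) : ℤ :=
  if E s t ∧ E t s then 0 else if E s t then 1 else if E t s then -1 else 0

lemma phiE_anti {V : Type*} (E : V → V → Prop) [DecidableRel E] (s t : V) :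
    phiE E t s = - phiE E s t := by
  unfold phiE
  by_cases h1 : E s t <;> by_cases h2 : E t s <;> simp [h1, h2]

lemma gain_eq {V : Type*} (E : V → V → Prop) [DecidableRel E] (k : ℕ) {u v : V}
    (w : (SimpleGraph.fromRel E).Walk u v) :
    gainOfWalk (genHermMatrix E k) w =
      Complex.exp ((Real.pi : ℂ) * Complex.I / (k + 1) * (wsum (phiE E) w : ℤ)) := by
  induction w with
  | nil => simp [gainOfWalk, wsum]
  | @cons a b c h p ih =>
    have hcons : gainOfWalk (genHermMatrix E k) (Walk.cons h p)
        = genHermMatrix E k a b * gainOfWalk (genHermMatrix E k) p := by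
      simp [gainOfWalk]
    have hor : a ≠ b ∧ (E a b ∨ E b a) := (SimpleGraph.fromRel_adj E a b).mp h
    have key : genHermMatrix E k a b
        = Complex.exp ((Real.pi : ℂ) * Complex.I / (k + 1) * (phiE E a b : ℤ)) := by
      by_cases h1 : E a b <;> by_cases h2 : E b a
      · simp [genHermMatrix, phiE, h1, h2]
      · simp [genHermMatrix, phiE, h1, h2]
      · simp only [genHermMatrix, Matrix.of_apply, phiE, h1, h2,
          and_true, true_and, and_false, false_and, if_true, if_false, not_true, not_false_iff]
        norm_num
        congr 1
        ring
      · exact absurd hor.2 (by simp [h1, h2])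
    have hws : wsum (phiE E) (Walk.cons h p) = phiE E a b + wsum (phiE E) p := by
      simp [wsum]
    rw [hcons, ih, key, hws, ← Complex.exp_add]
    congr 1
    push_cast
    ring

lemma gain_one_iff {V : Type*} (E : V → V → Prop) [DecidableRel E] (k : ℕ) {u v : V}
    (w : (SimpleGraph.fromRel E).Walk u v) :
    gainOfWalk (genHermMatrix E k) w = 1 ↔
      ((2 * (k + 1) : ℕ) : ℤ) ∣ wsum (phiE E) w := by
  rw [gain_eq, Complex.exp_eq_one_iff]
  have hπ : ((Real.pi : ℂ)) * Complex.I ≠ 0 :=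
    mul_ne_zero (Complex.ofReal_ne_zero.mpr Real.pi_ne_zero) Complex.I_ne_zero
  have hk : ((k : ℂ) + 1) ≠ 0 := by
    exact_mod_cast Nat.cast_add_one_ne_zero (R := ℂ) k
  constructor
  · rintro ⟨n, hn⟩
    refine ⟨n, ?_⟩
    have h2 : ((wsum (phiE E) w : ℤ) : ℂ) = ((2 * (k + 1) : ℕ) : ℤ) * n := by
      have h3 : (Real.pi : ℂ) * Complex.I * ((wsum (phiE E) w : ℤ) : ℂ)
          = (Real.pi : ℂ) * Complex.I * (((2 * (k + 1) : ℕ) : ℤ) * n) := by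
        field_simp at hn
        push_cast
        linear_combination ((Real.pi : ℂ) * Complex.I) * hn
      exact mul_left_cancel₀ hπ h3
    exact_mod_cast h2
  · rintro ⟨n, hn⟩
    refine ⟨n, ?_⟩
    rw [hn]
    push_cast
    field_simp

end Stmt17Aux

/-- `Hₖ(X)` is balanced iff the vertices admit a `ZMod (2(k+1))`-labelling in which digons
preserve the label and single arcs increase it by `1`. -/
theorem stmt_17 {V : Type*} [Fintype V] [Nonempty V] [DecidableEq V]
    (E : V → V → Prop) [DecidableRel E] (hirr : Irreflexive E)
    (k : ℕ) (hk : 1 ≤ k) (hconn : (SimpleGraph.fromRel E).Connected) :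
    (∀ (v : V) (w : (SimpleGraph.fromRel E).Walk v v), w.IsCycle →
        gainOfWalk (genHermMatrix E k) w = 1) ↔
      ∃ f : V → ZMod (2 * (k + 1)),
        ∀ s t, (E s t ∧ E t s → f t = f s) ∧ (E s t ∧ ¬ E t s → f t = f s + 1) := by
  classical
  haveI : NeZero (2 * (k + 1)) := ⟨by omega⟩
  constructor
  · intro hbal
    have hcyc : ∀ (v : V) (w : (SimpleGraph.fromRel E).Walk v v), w.IsCycle →
        ((2 * (k + 1) : ℕ) : ℤ) ∣ Stmt17Aux.wsum (Stmt17Aux.phiE E) w :=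
      fun v w hw => (Stmt17Aux.gain_one_iff E k w).mp (hbal v w hw)
    have hcons : ∀ (v : V) (w : (SimpleGraph.fromRel E).Walk v v),
        ((2 * (k + 1) : ℕ) : ℤ) ∣ Stmt17Aux.wsum (Stmt17Aux.phiE E) w :=
      fun v w =>
        Stmt17Aux.conserve _ (Stmt17Aux.phiE_anti E) _ hcyc w.length v w rfl
    obtain ⟨v₀⟩ := ‹Nonempty V›
    have hreach : ∀ v, (SimpleGraph.fromRel E).Reachable v₀ v :=
      fun v => hconn.preconnected v₀ v
    let wv : ∀ v, (SimpleGraph.fromRel E).Walk v₀ v := fun v => (hreach v).some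
    refine ⟨fun v => ((Stmt17Aux.wsum (Stmt17Aux.phiE E) (wv v) : ℤ) : ZMod (2 * (k + 1))), ?_⟩
    have key : ∀ s t, (SimpleGraph.fromRel E).Adj s t →
        ((Stmt17Aux.wsum (Stmt17Aux.phiE E) (wv t) : ℤ) : ZMod (2 * (k + 1)))
          = ((Stmt17Aux.wsum (Stmt17Aux.phiE E) (wv s) : ℤ) : ZMod (2 * (k + 1)))
            + ((Stmt17Aux.phiE E s t : ℤ) : ZMod (2 * (k + 1))) := by
      intro s t hst
      have hdvd := hcons v₀ ((wv s).append (SimpleGraph.Walk.cons hst (wv t).reverse))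
      have hzero : ((Stmt17Aux.wsum (Stmt17Aux.phiE E)
            ((wv s).append (SimpleGraph.Walk.cons hst (wv t).reverse)) : ℤ)
            : ZMod (2 * (k + 1))) = 0 :=
        (ZMod.intCast_zmod_eq_zero_iff_dvd _ _).mpr hdvd
      rw [Stmt17Aux.wsum_append, Stmt17Aux.wsum_cons,
        Stmt17Aux.wsum_reverse _ (Stmt17Aux.phiE_anti E)] at hzero
      push_cast at hzero
      linear_combination - hzero
    intro s t
    constructor
    · rintro ⟨h1, h2⟩
      have hadj : (SimpleGraph.fromRel E).Adj s t :=
        (SimpleGraph.fromRel_adj E s t).mpr ⟨fun he => hirr s (he ▸ h1), Or.inl h1⟩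
      have hk2 := key s t hadj
      simpa [Stmt17Aux.phiE, h1, h2] using hk2
    · rintro ⟨h1, h2⟩
      have hadj : (SimpleGraph.fromRel E).Adj s t :=
        (SimpleGraph.fromRel_adj E s t).mpr ⟨fun he => hirr s (he ▸ h1), Or.inl h1⟩
      have hk2 := key s t hadj
      simpa [Stmt17Aux.phiE, h1, h2] using hk2
  · rintro ⟨f, hf⟩ v w _
    rw [Stmt17Aux.gain_one_iff, ← ZMod.intCast_zmod_eq_zero_iff_dvd]
    have hstep : ∀ a b, (SimpleGraph.fromRel E).Adj a b →
        ((Stmt17Aux.phiE E a b : ℤ) : ZMod (2 * (k + 1))) = f b - f a := by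
      intro a b hab
      obtain ⟨hne', hor⟩ := (SimpleGraph.fromRel_adj E a b).mp hab
      by_cases h1 : E a b <;> by_cases h2 : E b a
      · have h3 := (hf a b).1 ⟨h1, h2⟩
        simp [Stmt17Aux.phiE, h1, h2, h3]
      · have h3 := (hf a b).2 ⟨h1, h2⟩
        simp [Stmt17Aux.phiE, h1, h2, h3]
      · have h3 := (hf b a).2 ⟨h2, h1⟩
        simp only [Stmt17Aux.phiE, h1, h2, and_true, true_and, and_false, false_and,
          if_true, if_false, not_false_iff]
        push_cast
        rw [h3]
        ring
      · rcases hor with h | h <;> contradiction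
    have hwalk : ∀ (a b : V) (p : (SimpleGraph.fromRel E).Walk a b),
        ((Stmt17Aux.wsum (Stmt17Aux.phiE E) p : ℤ) : ZMod (2 * (k + 1))) = f b - f a := by
      intro a b p
      induction p with
      | nil => simp
      | @cons a c b h q ih =>
        have : ((Stmt17Aux.phiE E a c + Stmt17Aux.wsum (Stmt17Aux.phiE E) q : ℤ)
            : ZMod (2 * (k + 1)))
            = ((Stmt17Aux.phiE E a c : ℤ) : ZMod (2 * (k + 1)))
              + ((Stmt17Aux.wsum (Stmt17Aux.phiE E) q : ℤ) : ZMod (2 * (k + 1))) := by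
          push_cast
          ring
        rw [Stmt17Aux.wsum_cons, this, hstep _ _ h, ih]
        ring
    rw [hwalk v v w, sub_self]
end

section
/- Let X be a digraph on a nonempty finite vertex set V whose underlying graph Γ(X) is connected, and let k ≥ 1 be a natural number. Then -H_k(X) is balanced, i.e., every cycle of Γ(X) has gain 1 under the matrix -H_k(X), if and only if there exists a function f : V → ZMod (2*(k+1)) such that for all s, t: (E s t and E t s) implies f t = f s + (k+1), and (E s t and ¬ E t s) implies f t = f s + (k+2). -/
open SimpleGraph

/-! ### Auxiliary material -/

section ZetaChi

noncomputable def zetaC (k : ℕ) : ℂ := Complex.exp ((Real.pi : ℂ) * Complex.I / (k+1))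

lemma zetaC_prim (k : ℕ) : IsPrimitiveRoot (zetaC k) (2*(k+1)) := by
  have h := Complex.isPrimitiveRoot_exp (2*(k+1)) (by positivity)
  have h1 : ((k:ℂ)+1) ≠ 0 := by exact_mod_cast Nat.succ_ne_zero k
  convert h using 2
  unfold zetaC
  congr 1
  push_cast
  field_simp

noncomputable def chiC (k : ℕ) (a : ZMod (2*(k+1))) : ℂ := zetaC k ^ a.val

lemma chiC_zero (k : ℕ) : chiC k 0 = 1 := by
  have : NeZero (2*(k+1)) := ⟨by omega⟩
  simp [chiC]

lemma zetaC_pow_mod (k m : ℕ) : zetaC k ^ (m % (2*(k+1))) = zetaC k ^ m := by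
  conv_rhs => rw [← Nat.div_add_mod m (2*(k+1))]
  rw [pow_add, pow_mul, (zetaC_prim k).pow_eq_one, one_pow, one_mul]

lemma chiC_add (k : ℕ) (a b : ZMod (2*(k+1))) : chiC k (a+b) = chiC k a * chiC k b := by
  have : NeZero (2*(k+1)) := ⟨by omega⟩
  rw [chiC, ZMod.val_add, zetaC_pow_mod, pow_add]; rfl

lemma chiC_eq_one_iff (k : ℕ) (a : ZMod (2*(k+1))) : chiC k a = 1 ↔ a = 0 := by
  have : NeZero (2*(k+1)) := ⟨by omega⟩
  constructor
  · intro h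
    have hd := ((zetaC_prim k).pow_eq_one_iff_dvd a.val).mp h
    have hv : a.val = 0 := Nat.eq_zero_of_dvd_of_lt hd (ZMod.val_lt a)
    exact (ZMod.val_eq_zero a).mp hv
  · rintro rfl; exact chiC_zero k

end ZetaChi

section G
variable {V : Type*} (E : V → V → Prop) [DecidableRel E] (k : ℕ)

def gfun (s t : V) : ZMod (2*(k+1)) :=
  if E s t ∧ E t s then (k : ZMod (2*(k+1))) + 1
  else if E s t then (k : ZMod (2*(k+1))) + 2
  else if E t s then (k : ZMod (2*(k+1)))
  else 0

variable {E k}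

lemma two_k_two : (2 : ZMod (2*(k+1))) * ((k : ZMod (2*(k+1))) + 1) = 0 := by
  have h := ZMod.natCast_self (2*(k+1))
  push_cast at h
  linear_combination h

lemma gfun_antisymm {s t : V} (h : E s t ∨ E t s) : gfun E k t s = - gfun E k s t := by
  have h0 := two_k_two (k := k)
  by_cases h1 : E s t <;> by_cases h2 : E t s <;>
    simp only [gfun, h1, h2, and_true, and_false, true_and, false_and, if_true, if_false,
      not_true, not_false_iff, true_or, or_true] <;>
    first
      | (exfalso; tauto)
      | simp [h1, h2]
      | skip
  all_goals linear_combination h0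

end G

section Entry
variable {V : Type*} {E : V → V → Prop} [DecidableRel E] {k : ℕ}

lemma zetaC_pow_succ_k (k : ℕ) : zetaC k ^ (k+1) = -1 := by
  have h1 : ((k:ℂ)+1) ≠ 0 := by exact_mod_cast Nat.succ_ne_zero k
  rw [zetaC, ← Complex.exp_nat_mul]
  rw [show ((k+1 : ℕ) : ℂ) * ((Real.pi : ℂ) * Complex.I / ((k:ℂ)+1)) = (Real.pi : ℂ) * Complex.I by
    push_cast; field_simp]
  exact Complex.exp_pi_mul_I

lemma entry_eq (hk : 1 ≤ k) {s t : V} (h : (SimpleGraph.fromRel E).Adj s t) :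
    (-(genHermMatrix E k)) s t = chiC k (gfun E k s t) := by
  have hNZ : NeZero (2*(k+1)) := ⟨by omega⟩
  rw [SimpleGraph.fromRel_adj] at h
  obtain ⟨hne, hor⟩ := h
  have hv1 : ((k : ZMod (2*(k+1))) + 1).val = k + 1 := by
    rw [show (k : ZMod (2*(k+1))) + 1 = ((k+1 : ℕ) : ZMod (2*(k+1))) by push_cast; ring,
      ZMod.val_natCast, Nat.mod_eq_of_lt (by omega)]
  have hv2 : ((k : ZMod (2*(k+1))) + 2).val = k + 2 := by
    rw [show (k : ZMod (2*(k+1))) + 2 = ((k+2 : ℕ) : ZMod (2*(k+1))) by push_cast; ring,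
      ZMod.val_natCast, Nat.mod_eq_of_lt (by omega)]
  have hv3 : ((k : ZMod (2*(k+1)))).val = k := by
    rw [ZMod.val_natCast, Nat.mod_eq_of_lt (by omega)]
  have hzne : zetaC k ≠ 0 := Complex.exp_ne_zero _
  rcases Classical.em (E s t) with h1 | h1 <;> rcases Classical.em (E t s) with h2 | h2
  · simp only [Matrix.neg_apply, genHermMatrix, Matrix.of_apply, h1, h2, and_self, if_true,
      chiC, gfun, hv1]
    rw [zetaC_pow_succ_k]
  · simp only [Matrix.neg_apply, genHermMatrix, Matrix.of_apply, h1, h2, and_self, if_true,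
      and_true, and_false, true_and, false_and, not_true, not_false_iff, if_false, if_true,
      chiC, gfun]
    rw [hv2, pow_succ, zetaC_pow_succ_k, zetaC]
    ring
  · simp only [Matrix.neg_apply, genHermMatrix, Matrix.of_apply, h1, h2, and_self, if_true,
      and_true, and_false, true_and, false_and, not_true, not_false_iff, if_false, if_true,
      chiC, gfun]
    rw [hv3]
    have hpow : zetaC k ^ k * zetaC k = -(Complex.exp (-((Real.pi : ℂ) * Complex.I) / ((k:ℂ)+1)) * zetaC k) := by
      rw [← pow_succ, zetaC_pow_succ_k, zetaC, ← Complex.exp_add]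
      rw [show -((Real.pi : ℂ) * Complex.I) / ((k:ℂ)+1) + (Real.pi : ℂ) * Complex.I / ((k:ℂ)+1) = 0 by ring]
      simp
    symm
    apply mul_right_cancel₀ hzne
    rw [hpow]; ring
  · exfalso; tauto

end Entry

section Walks
variable {V : Type*} [DecidableEq V] {G : SimpleGraph V}

lemma split_dup : ∀ {a b : V} (p : G.Walk a b), ¬ p.support.Nodup →
    ∃ (x : V) (q : G.Walk a x) (c : G.Walk x x) (r : G.Walk x b),
      p = q.append (c.append r) ∧ 0 < c.length := by
  intro a b p
  induction p with
  | nil => intro h; simp at h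
  | @cons a y b h' p' ih =>
    intro h
    by_cases hm : a ∈ p'.support
    · refine ⟨a, Walk.nil, Walk.cons h' (p'.takeUntil a hm), p'.dropUntil a hm, ?_, by simp⟩
      rw [Walk.nil_append, Walk.cons_append, Walk.take_spec]
    · have hnd : ¬ p'.support.Nodup := by
        simp only [Walk.support_cons, List.nodup_cons] at h
        tauto
      obtain ⟨x, q, c, r, heq, hlen⟩ := ih hnd
      exact ⟨x, Walk.cons h' q, c, r, by rw [Walk.cons_append, ← heq], hlen⟩

omit [DecidableEq V] in
lemma path_edge_length : ∀ {a b : V} (p : G.Walk a b), p.IsPath → s(b,a) ∈ p.edges →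
    p.length = 1 := by
  intro a b p
  induction p with
  | nil => intro _ he; simp at he
  | @cons a c b h q ih =>
    intro hp he
    rw [Walk.edges_cons, List.mem_cons] at he
    rcases he with he | he
    · rw [Sym2.eq_iff] at he
      rcases he with ⟨hba, hac⟩ | ⟨hbc, -⟩
      · exact absurd (hba ▸ hac : b = c) (hba ▸ h.ne)
      · subst hbc
        have : q = Walk.nil := Walk.isPath_iff_eq_nil.mp (Walk.IsPath.of_cons hp)
        subst this
        simp
    · have ha : a ∈ q.support := Walk.snd_mem_support_of_mem_edges q he
      rw [Walk.cons_isPath_iff] at hp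
      exact absurd ha hp.2

end Walks

section Gsum
variable {V : Type*} [DecidableEq V] {E : V → V → Prop} [DecidableRel E] {k : ℕ}

noncomputable def gsum (E : V → V → Prop) [DecidableRel E] (k : ℕ) {u v : V}
    (w : (SimpleGraph.fromRel E).Walk u v) : ZMod (2*(k+1)) :=
  (w.darts.map fun d => gfun E k d.fst d.snd).sum

lemma gsum_nil {v : V} : gsum E k (Walk.nil : (SimpleGraph.fromRel E).Walk v v) = 0 := by
  simp [gsum]

lemma gsum_cons {u v w : V} (h : (SimpleGraph.fromRel E).Adj u v)
    (p : (SimpleGraph.fromRel E).Walk v w) :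
    gsum E k (Walk.cons h p) = gfun E k u v + gsum E k p := by
  simp [gsum]

lemma gsum_append {u v w : V} (p : (SimpleGraph.fromRel E).Walk u v)
    (q : (SimpleGraph.fromRel E).Walk v w) :
    gsum E k (p.append q) = gsum E k p + gsum E k q := by
  simp [gsum]

lemma gsum_reverse {u v : V} (p : (SimpleGraph.fromRel E).Walk u v) :
    gsum E k p.reverse = - gsum E k p := by
  induction p with
  | nil => simp [gsum]
  | @cons a c b h p ih =>
    rw [Walk.reverse_cons, gsum_append, gsum_cons, gsum_cons, gsum_nil, ih,
      gfun_antisymm ((SimpleGraph.fromRel_adj E a c).mp h).2]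
    ring

lemma gain_eq_chi (hk : 1 ≤ k) {u v : V} (w : (SimpleGraph.fromRel E).Walk u v) :
    gainOfWalk (-(genHermMatrix E k)) w = chiC k (gsum E k w) := by
  induction w with
  | nil => simp [gainOfWalk, gsum_nil, chiC_zero]
  | @cons a c b h p ih =>
    have : gainOfWalk (-(genHermMatrix E k)) (Walk.cons h p)
        = (-(genHermMatrix E k)) a c * gainOfWalk (-(genHermMatrix E k)) p := by
      simp [gainOfWalk]
    rw [this, ih, entry_eq hk h, gsum_cons, chiC_add]

lemma gsum_closed
    (hcyc : ∀ (v : V) (w : (SimpleGraph.fromRel E).Walk v v), w.IsCycle → gsum E k w = 0) :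
    ∀ (N : ℕ) (v : V) (w : (SimpleGraph.fromRel E).Walk v v), w.length ≤ N → gsum E k w = 0 := by
  intro N
  induction N with
  | zero =>
    intro v w hw
    rw [Walk.nil_iff_eq_nil.mp (Walk.length_eq_zero_iff.mp (Nat.le_zero.mp hw))]
    exact gsum_nil
  | succ N ih =>
    intro v w hw
    cases w with
    | nil => exact gsum_nil
    | @cons _ u _ h p =>
      by_cases hp : p.support.Nodup
      · by_cases he : s(v, u) ∈ p.edges
        · have hl := path_edge_length p ((Walk.isPath_def p).mpr hp) he
          cases p with
          | nil => simp at hl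
          | @cons _ y _ h' p' =>
            cases p' with
            | nil =>
              rw [gsum_cons, gsum_cons, gsum_nil,
                gfun_antisymm ((SimpleGraph.fromRel_adj E v u).mp h).2]
              ring
            | cons h'' p'' => simp [Walk.length_cons] at hl
        · exact hcyc v _ ((Walk.cons_isCycle_iff p h).mpr ⟨(Walk.isPath_def p).mpr hp, he⟩)
      · obtain ⟨x, q, c, r, heq, hc⟩ := split_dup p hp
        subst heq
        have hlen : (Walk.cons h (q.append (c.append r))).length ≤ N + 1 := hw
        simp only [Walk.length_cons, Walk.length_append] at hlen
        have h1 : gsum E k c = 0 := ih x c (by omega)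
        have h2 : gsum E k (Walk.cons h (q.append r)) = 0 := by
          apply ih v
          simp only [Walk.length_cons, Walk.length_append]
          omega
        rw [gsum_cons, gsum_append] at h2
        rw [gsum_cons, gsum_append, gsum_append]
        linear_combination h1 + h2

end Gsum

/-- `-Hₖ(X)` is balanced iff the vertices admit a `ZMod (2(k+1))`-labelling in which digons
shift the label by `k+1` and single arcs shift it by `k+2`. -/
theorem stmt_18 {V : Type*} [Fintype V] [Nonempty V] [DecidableEq V]
    (E : V → V → Prop) [DecidableRel E] (hirr : Irreflexive E)
    (k : ℕ) (hk : 1 ≤ k) (hconn : (SimpleGraph.fromRel E).Connected) :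
    (∀ (v : V) (w : (SimpleGraph.fromRel E).Walk v v), w.IsCycle →
        gainOfWalk (-(genHermMatrix E k)) w = 1) ↔
      ∃ f : V → ZMod (2 * (k + 1)),
        ∀ s t, (E s t ∧ E t s → f t = f s + ((k : ZMod (2 * (k + 1))) + 1)) ∧
          (E s t ∧ ¬ E t s → f t = f s + ((k : ZMod (2 * (k + 1))) + 2)) := by
  constructor
  · intro hbal
    have hcyc : ∀ (v : V) (w : (SimpleGraph.fromRel E).Walk v v), w.IsCycle → gsum E k w = 0 := by
      intro v w hw
      have h1 := hbal v w hw
      rw [gain_eq_chi hk w] at h1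
      exact (chiC_eq_one_iff k _).mp h1
    have hclosed : ∀ (v : V) (w : (SimpleGraph.fromRel E).Walk v v), gsum E k w = 0 :=
      fun v w => gsum_closed hcyc w.length v w le_rfl
    obtain ⟨v₀⟩ := ‹Nonempty V›
    have hpath : ∀ v : V, Nonempty ((SimpleGraph.fromRel E).Walk v₀ v) :=
      fun v => hconn.preconnected v₀ v
    set p : ∀ v : V, (SimpleGraph.fromRel E).Walk v₀ v := fun v => (hpath v).some with hp
    set f : V → ZMod (2 * (k + 1)) := fun v => gsum E k (p v) with hf
    have key : ∀ s t : V, E s t → f t = f s + gfun E k s t := by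
      intro s t hst
      have hne : s ≠ t := by rintro rfl; exact hirr s hst
      have hadj : (SimpleGraph.fromRel E).Adj s t :=
        (SimpleGraph.fromRel_adj E s t).mpr ⟨hne, Or.inl hst⟩
      have hzero := hclosed v₀ ((p s).append (Walk.cons hadj (p t).reverse))
      rw [gsum_append, gsum_cons, gsum_reverse] at hzero
      linear_combination -hzero
    refine ⟨f, fun s t => ⟨?_, ?_⟩⟩
    · rintro ⟨h1, h2⟩
      have := key s t h1
      rwa [show gfun E k s t = (k : ZMod (2 * (k + 1))) + 1 by simp [gfun, h1, h2]] at this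
    · rintro ⟨h1, h2⟩
      have := key s t h1
      rwa [show gfun E k s t = (k : ZMod (2 * (k + 1))) + 2 by simp [gfun, h1, h2]] at this
  · rintro ⟨f, hf⟩ v w _
    have h0 := two_k_two (k := k)
    have step : ∀ s t : V, (SimpleGraph.fromRel E).Adj s t → f t = f s + gfun E k s t := by
      intro s t hadj
      obtain ⟨hne, hor⟩ := (SimpleGraph.fromRel_adj E s t).mp hadj
      by_cases h1 : E s t <;> by_cases h2 : E t s
      · rw [(hf s t).1 ⟨h1, h2⟩]; simp [gfun, h1, h2]
      · rw [(hf s t).2 ⟨h1, h2⟩]; simp [gfun, h1, h2]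
      · have := (hf t s).2 ⟨h2, h1⟩
        rw [show gfun E k s t = (k : ZMod (2 * (k + 1))) by simp [gfun, h1, h2]]
        linear_combination -this - h0
      · exfalso; tauto
    have tele : ∀ {a b : V} (q : (SimpleGraph.fromRel E).Walk a b),
        gsum E k q = f b - f a := by
      intro a b q
      induction q with
      | nil => simp [gsum_nil]
      | @cons a c b h p ih =>
        rw [gsum_cons, ih, step a c h]
        ring
    rw [gain_eq_chi hk w, tele w, sub_self, chiC_zero]
end
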